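/- arXiv:1105.1139 — 5 statements merged into one kernel-verified Lean document; each statement's English description precedes it below -/
import Mathlib

section
/- For every integer s ≥ 1, on the length-s component of Γ̃ the kernel of Sq^1 equals the image of Sq^1: if x ∈ Γ̃ is a sum of monomials all of length s and (x)Sq^1 = 0, then there exists y ∈ Γ̃, a sum of monomials of length s, with (y)Sq^1 = x. -/
noncomputable section

abbrev Gam : Type := FreeAlgebra (ZMod 2) {k : ℕ // 1 ≤ k}

/-- The canonical generators γ_j, j ≥ 1 (γ_j := 0 for j = 0, never used). -/
def γ (j : ℕ) : Gam :=
  if h : 1 ≤ j then FreeAlgebra.ι (ZMod 2) (⟨j, h⟩ : {k : ℕ // 1 ≤ k}) else 0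

/-- Γ̃_{s,*}: the 𝔽₂-span of the monomials of length s. -/
def GammaS (s : ℕ) : Submodule (ZMod 2) Gam :=
  Submodule.span (ZMod 2)
    {x | ∃ L : List ℕ, (∀ i ∈ L, 1 ≤ i) ∧ L.length = s ∧ x = (L.map γ).prod}


abbrev Idx := {k : ℕ // 1 ≤ k}

def mon (l : List Idx) : Gam := (l.map (FreeAlgebra.ι (ZMod 2))).prod

theorem γ_eq (a : Idx) : γ a.1 = FreeAlgebra.ι (ZMod 2) a := by
  rw [γ, dif_pos a.2]

theorem mon_cons (a : Idx) (t : List Idx) :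
    mon (a :: t) = FreeAlgebra.ι (ZMod 2) a * mon t := by simp [mon]

theorem mon_eq_gprod (l : List Idx) : mon l = ((l.map Subtype.val).map γ).prod := by
  induction l with
  | nil => rfl
  | cons a t ih => simp [mon_cons, ih, γ_eq a]

def hFun : List Idx → Gam
  | [] => 0
  | a :: t => if a.1 % 2 = 1 then γ (a.1 + 1) * mon t else 0

abbrev E : Gam ≃ₐ[ZMod 2] MonoidAlgebra (ZMod 2) (FreeMonoid Idx) :=
  FreeAlgebra.equivMonoidAlgebraFreeMonoid

theorem E_mon (l : List Idx) :
    E (mon l) = MonoidAlgebra.single (FreeMonoid.ofList l) 1 := by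
  induction l with
  | nil =>
      simp [mon]
      rfl
  | cons a t ih =>
      rw [mon_cons, map_mul, ih]
      rw [show (E (FreeAlgebra.ι (ZMod 2) a)) = MonoidAlgebra.single (FreeMonoid.of a) 1 by
        simp [E, FreeAlgebra.equivMonoidAlgebraFreeMonoid]]
      rw [MonoidAlgebra.single_mul_single, one_mul]
      rfl

noncomputable def B : Module.Basis (FreeMonoid Idx) (ZMod 2) Gam :=
  FreeAlgebra.basisFreeMonoid (ZMod 2) Idx

theorem B_apply (m : FreeMonoid Idx) : B m = mon m.toList := by
  have : B m = E.symm (MonoidAlgebra.single m 1) := by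
    simp [B, FreeAlgebra.basisFreeMonoid, Module.Basis.map_apply]
  rw [this, AlgEquiv.symm_apply_eq, E_mon]
  rfl

noncomputable def H : Gam →ₗ[ZMod 2] Gam :=
  B.constr (ZMod 2) (fun m => hFun m.toList)

theorem H_mon (l : List Idx) : H (mon l) = hFun l := by
  have := B.constr_basis (ZMod 2) (fun m => hFun m.toList) (FreeMonoid.ofList l)
  rw [show B (FreeMonoid.ofList l) = mon l from B_apply _] at this
  simpa [H] using this

/-- The span of monomials of length `s`, indexed by `Idx`-lists. -/
def GS (s : ℕ) : Submodule (ZMod 2) Gam :=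
  Submodule.span (ZMod 2) {x | ∃ l : List Idx, l.length = s ∧ x = mon l}

theorem GammaS_eq (s : ℕ) : GammaS s = GS s := by
  apply le_antisymm <;> apply Submodule.span_le.2
  · rintro x ⟨L, hL, hlen, rfl⟩
    apply Submodule.subset_span
    refine ⟨L.pmap (fun i h => (⟨i, h⟩ : Idx)) hL, by simp [hlen], ?_⟩
    rw [mon_eq_gprod]
    congr 1
    simp [List.map_pmap]
  · rintro x ⟨l, hlen, rfl⟩
    apply Submodule.subset_span
    refine ⟨l.map Subtype.val, ?_, by simpa using hlen, mon_eq_gprod l⟩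
    intro i hi
    simp only [List.mem_map] at hi
    obtain ⟨a, -, rfl⟩ := hi
    exact a.2

theorem two_zero (z : Gam) : z + z = 0 := by
  have : z + z = (2 : ZMod 2) • z := by
    rw [two_smul]
  rw [this, show (2 : ZMod 2) = 0 from rfl, zero_smul]

theorem mon_mem (l : List Idx) : mon l ∈ GS l.length :=
  Submodule.subset_span ⟨l, rfl, rfl⟩

theorem mul_ι_mem (a : Idx) (s : ℕ) :
    ∀ n ∈ GS s, FreeAlgebra.ι (ZMod 2) a * n ∈ GS (s + 1) := by
  intro n hn
  induction hn using Submodule.span_induction with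
  | mem x hx =>
      obtain ⟨l, hlen, rfl⟩ := hx
      rw [← mon_cons]
      exact hlen ▸ mon_mem (a :: l)
  | zero => simp
  | add x y _ _ hx hy => rw [mul_add]; exact (GS (s+1)).add_mem hx hy
  | smul c x _ hx => rw [mul_smul_comm]; exact (GS (s+1)).smul_mem c hx

theorem H_mem (s : ℕ) : ∀ x ∈ GS s, H x ∈ GS s := by
  intro x hx
  induction hx using Submodule.span_induction with
  | mem x hx =>
      obtain ⟨l, rfl, rfl⟩ := hx
      rw [H_mon]
      match l with
      | [] => simp [hFun]
      | a :: t =>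
          simp only [hFun]
          split
          · rw [show γ (a.1 + 1) = FreeAlgebra.ι (ZMod 2) ⟨a.1 + 1, by omega⟩ from
              γ_eq ⟨a.1 + 1, by omega⟩, ← mon_cons]
            have := mon_mem ((⟨a.1 + 1, by omega⟩ : Idx) :: t)
            simpa using this
          · exact (GS _).zero_mem
  | zero => simp
  | add x y _ _ hx hy => rw [map_add]; exact (GS s).add_mem hx hy
  | smul c x _ hx => rw [map_smul]; exact (GS s).smul_mem c hx

theorem H_mul (a : Idx) (s : ℕ) :
    ∀ n ∈ GS s, H (FreeAlgebra.ι (ZMod 2) a * n)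
      = if a.1 % 2 = 1 then γ (a.1 + 1) * n else 0 := by
  intro n hn
  induction hn using Submodule.span_induction with
  | mem x hx =>
      obtain ⟨l, hlen, rfl⟩ := hx
      rw [← mon_cons, H_mon]
      rfl
  | zero => split <;> simp
  | add x y _ _ hx hy =>
      rw [mul_add, map_add, hx, hy]
      split <;> simp [mul_add]
  | smul c x _ hx =>
      rw [mul_smul_comm, map_smul, hx]
      split <;> simp [mul_smul_comm]

section Main

variable (Sq1 : Gam →ₗ[ZMod 2] Gam)
    (hmul : ∀ x y : Gam, Sq1 (x * y) = x * Sq1 y + Sq1 x * y)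
    (hγ : ∀ j : ℕ, 1 ≤ j → Sq1 (γ j) = if j % 2 = 0 then γ (j - 1) else 0)

include hmul in
theorem Sq1_one : Sq1 1 = 0 := by
  have := hmul 1 1
  rw [one_mul, mul_one, one_mul] at this
  have h2 := two_zero (Sq1 1)
  nth_rewrite 1 [this] at h2
  rwa [add_assoc, two_zero, add_zero] at h2

include hmul hγ in
theorem Sq1_mem (s : ℕ) : ∀ x ∈ GS s, Sq1 x ∈ GS s := by
  intro x hx
  induction hx using Submodule.span_induction with
  | mem x hx =>
      obtain ⟨l, rfl, rfl⟩ := hx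
      induction l with
      | nil => simp [mon, Sq1_one Sq1 hmul]
      | cons a t ih =>
          rw [mon_cons, hmul]
          apply Submodule.add_mem
          · exact mul_ι_mem a t.length _ ih
          · rw [← γ_eq a, hγ a.1 a.2]
            split
            · next he =>
                have h1 : 1 ≤ a.1 - 1 := by have := a.2; omega
                rw [show γ (a.1 - 1) = FreeAlgebra.ι (ZMod 2) ⟨a.1 - 1, h1⟩ from γ_eq ⟨a.1 - 1, h1⟩,
                  ← mon_cons]
                have := mon_mem ((⟨a.1 - 1, h1⟩ : Idx) :: t)
                simpa using this
            · simp
  | zero => simp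
  | add x y _ _ hx hy => rw [map_add]; exact Submodule.add_mem _ hx hy
  | smul c x _ hx => rw [map_smul]; exact Submodule.smul_mem _ c hx

include hmul hγ in
theorem homotopy_mon (l : List Idx) (hne : l ≠ []) :
    Sq1 (H (mon l)) + H (Sq1 (mon l)) = mon l := by
  match l with
  | a :: t =>
    have hw : mon t ∈ GS t.length := mon_mem t
    have hsw : Sq1 (mon t) ∈ GS t.length := Sq1_mem Sq1 hmul hγ _ _ hw
    rw [H_mon, mon_cons, hmul, ← γ_eq a, hγ a.1 a.2]
    simp only [hFun]
    rcases Nat.even_or_odd a.1 with he | ho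
    · have h0 : a.1 % 2 = 0 := Nat.even_iff.1 he
      have h1 : ¬ (a.1 % 2 = 1) := by omega
      have ha1 : 1 ≤ a.1 - 1 := by have := a.2; omega
      rw [if_neg h1, if_pos h0, map_zero, map_add, zero_add]
      rw [γ_eq a, H_mul a t.length _ hsw, if_neg h1, zero_add]
      rw [show γ (a.1 - 1) = FreeAlgebra.ι (ZMod 2) ⟨a.1 - 1, ha1⟩ from γ_eq ⟨a.1 - 1, ha1⟩]
      rw [H_mul ⟨a.1 - 1, ha1⟩ t.length _ hw]
      have : (a.1 - 1) % 2 = 1 := by omega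
      rw [if_pos this]
      have : a.1 - 1 + 1 = a.1 := by have := a.2; omega
      rw [this, γ_eq a]
    · have h1 : a.1 % 2 = 1 := Nat.odd_iff.1 ho
      have h0 : ¬ (a.1 % 2 = 0) := by omega
      rw [if_pos h1, if_neg h0, zero_mul, add_zero]
      rw [γ_eq a, H_mul a t.length _ hsw, if_pos h1]
      rw [hmul (γ (a.1 + 1)) (mon t), hγ (a.1 + 1) (by omega)]
      have : (a.1 + 1) % 2 = 0 := by omega
      rw [if_pos this, Nat.add_sub_cancel, γ_eq a]
      abel_nf
      rw [show ∀ z : Gam, (2 : ℤ) • z = 0 from fun z => by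
        rw [two_zsmul]; exact two_zero z]
      simp
  | [] => exact absurd rfl hne

include hmul hγ in
theorem homotopy (s : ℕ) (hs : 1 ≤ s) :
    ∀ x ∈ GS s, Sq1 (H x) + H (Sq1 x) = x := by
  intro x hx
  induction hx using Submodule.span_induction with
  | mem x hx =>
      obtain ⟨l, hlen, rfl⟩ := hx
      exact homotopy_mon Sq1 hmul hγ l (by rintro rfl; simp at hlen; omega)
  | zero => simp
  | add x y _ _ hx hy =>
      rw [map_add, map_add, map_add, map_add]
      calc Sq1 (H x) + Sq1 (H y) + (H (Sq1 x) + H (Sq1 y))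
          = (Sq1 (H x) + H (Sq1 x)) + (Sq1 (H y) + H (Sq1 y)) := by abel
        _ = x + y := by rw [hx, hy]
  | smul c x _ hx =>
      rw [map_smul, map_smul, map_smul, map_smul, ← smul_add, hx]

end Main

/-- On each length component of Γ̃, the kernel of Sq¹ equals the image of Sq¹.
Here Sq¹ is (any) 𝔽₂-linear derivation on Γ̃ with (γ_j)Sq¹ = γ_{j-1} for j even
and (γ_j)Sq¹ = 0 for j odd; these conditions determine it uniquely. -/
theorem ker_Sq1_eq_im_Sq1_on_length_component
    (Sq1 : Gam →ₗ[ZMod 2] Gam)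
    (hmul : ∀ x y : Gam, Sq1 (x * y) = x * Sq1 y + Sq1 x * y)
    (hγ : ∀ j : ℕ, 1 ≤ j → Sq1 (γ j) = if j % 2 = 0 then γ (j - 1) else 0)
    (s : ℕ) (hs : 1 ≤ s) (x : Gam) (hx : x ∈ GammaS s) (hker : Sq1 x = 0) :
    ∃ y ∈ GammaS s, Sq1 y = x := by
  rw [GammaS_eq] at hx ⊢
  refine ⟨H x, H_mem s x hx, ?_⟩
  have := homotopy Sq1 hmul hγ s hs x hx
  rwa [hker, map_zero, add_zero] at this

end
end

section
/- For every monomial μ = γ_{i_1}⋯γ_{i_s} in Γ̃ (s ≥ 1, each i_j ≥ 1), the element (μ)Sq^1 lies in the 𝔽₂-subalgebra of Γ̃ generated by the set S_0 = {σ(m_1,…,m_r) : r ≥ 1, m_1,…,m_r ≥ 0}. -/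
noncomputable section

/-- For every monomial μ = γ_{i_1}⋯γ_{i_s} (s ≥ 1, each i_j ≥ 1), (μ)Sq¹ lies
in the 𝔽₂-subalgebra generated by S₀ = {σ(m_1,…,m_r)}, where
σ(m_1,…,m_r) = ([2m_1+2,…,2m_r+2])Sq¹.  Here Sq¹ is (any) 𝔽₂-linear derivation
on Γ̃ with (γ_j)Sq¹ = γ_{j-1} for j even and 0 for j odd. -/
theorem Sq1_of_monomial_mem_adjoin_S0
    (Sq1 : Gam →ₗ[ZMod 2] Gam)
    (hmul : ∀ x y : Gam, Sq1 (x * y) = x * Sq1 y + Sq1 x * y)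
    (hγ : ∀ j : ℕ, 1 ≤ j → Sq1 (γ j) = if j % 2 = 0 then γ (j - 1) else 0)
    (L : List ℕ) (hL : L ≠ []) (hL1 : ∀ i ∈ L, 1 ≤ i) :
    Sq1 ((L.map γ).prod) ∈ Algebra.adjoin (ZMod 2)
      {x : Gam | ∃ m : List ℕ, m ≠ [] ∧
        x = Sq1 ((m.map fun mi => γ (2 * mi + 2)).prod)} := by
  set S : Set Gam := {x : Gam | ∃ m : List ℕ, m ≠ [] ∧
        x = Sq1 ((m.map fun mi => γ (2 * mi + 2)).prod)} with hS
  -- characteristic 2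
  have hxx : ∀ x : Gam, x + x = 0 := by
    intro x
    have h := two_smul (ZMod 2) x
    have h2 : (2 : ZMod 2) = 0 := by decide
    rw [h2, zero_smul] at h
    exact h.symm
  have h1 : Sq1 1 = 0 := by
    have h := hmul 1 1
    simp only [mul_one, one_mul] at h
    have := hxx (Sq1 1)
    rw [← h] at this
    exact this
  -- even monomials give elements of S
  have evenS : ∀ E : List ℕ, E ≠ [] → (∀ i ∈ E, i % 2 = 0) → (∀ i ∈ E, 1 ≤ i) →
      Sq1 ((E.map γ).prod) ∈ S := by
    intro E hne heven hpos
    refine ⟨E.map (fun i => i / 2 - 1), by simpa using hne, ?_⟩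
    congr 2
    rw [List.map_map]
    apply List.map_congr_left
    intro i hi
    have h2 := heven i hi
    have h3 := hpos i hi
    have : 2 * (i / 2 - 1) + 2 = i := by omega
    simp [this]
  -- odd generators are in S
  have oddS : ∀ o : ℕ, 1 ≤ o → o % 2 = 1 → γ o ∈ S := by
    intro o h1o h2o
    refine ⟨[o / 2], by simp, ?_⟩
    have he : 2 * (o / 2) + 2 = o + 1 := by omega
    simp only [List.map_cons, List.map_nil, List.prod_cons, List.prod_nil, mul_one, he]
    rw [hγ (o + 1) (by omega)]
    have : (o + 1) % 2 = 0 := by omega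
    simp [this]
  -- head of dropWhile is odd
  have drop_head : ∀ (l : List ℕ) (a : ℕ) (t : List ℕ),
      l.dropWhile (fun i => i % 2 == 0) = a :: t → ¬ (a % 2 = 0) := by
    intro l
    induction l with
    | nil => simp [List.dropWhile]
    | cons x xs ih =>
      intro a t h
      by_cases hx : x % 2 = 0
      · rw [List.dropWhile_cons_of_pos (by simpa using hx)] at h
        exact ih a t h
      · rw [List.dropWhile_cons_of_neg (by simpa using hx)] at h
        cases h
        simpa using hx
  have main : ∀ n : ℕ, ∀ L : List ℕ, L.length ≤ n → (∀ i ∈ L, 1 ≤ i) →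
      Sq1 ((L.map γ).prod) ∈ Algebra.adjoin (ZMod 2) S := by
    intro n
    induction n with
    | zero =>
      intro L hlen _
      have : L = [] := List.eq_nil_of_length_eq_zero (Nat.le_zero.mp hlen)
      subst this
      simp only [List.map_nil, List.prod_nil, h1]
      exact zero_mem _
    | succ n ih =>
      intro L hlen hpos
      set p : ℕ → Bool := fun i => i % 2 == 0 with hp
      rcases hR : L.dropWhile p with _ | ⟨o, ν⟩
      · -- all even
        have hsplit : L.takeWhile p = L := by
          have := List.takeWhile_append_dropWhile (p := p) (l := L)
          rw [hR, List.append_nil] at this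
          exact this
        have heven : ∀ i ∈ L, i % 2 = 0 := by
          intro i hi
          rw [← hsplit] at hi
          have := List.mem_takeWhile_imp hi
          simpa [hp] using this
        by_cases hne : L = []
        · subst hne
          simp only [List.map_nil, List.prod_nil, h1]
          exact zero_mem _
        · exact Algebra.subset_adjoin (evenS L hne heven hpos)
      · -- L = E ++ o :: ν with o odd
        have ho : ¬ (o % 2 = 0) := drop_head L o ν hR
        set E : List ℕ := L.takeWhile p with hE
        have hsplit : L = E ++ o :: ν := by
          rw [hE, ← hR, List.takeWhile_append_dropWhile]
        have hoL : o ∈ L := by rw [hsplit]; simp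
        have hνL : ∀ i ∈ ν, i ∈ L := by intro i hi; rw [hsplit]; simp [hi]
        have hνpos : ∀ i ∈ ν, 1 ≤ i := fun i hi => hpos i (hνL i hi)
        have hopos : 1 ≤ o := hpos o hoL
        have hνlen : ν.length ≤ n := by
          have := congrArg List.length hsplit
          simp at this
          omega
        have hSν : Sq1 ((ν.map γ).prod) ∈ Algebra.adjoin (ZMod 2) S :=
          ih ν hνlen hνpos
        have hSg : Sq1 (γ o) = 0 := by rw [hγ o hopos]; simp [ho]
        have hSg' : Sq1 (γ (o + 1)) = γ o := by
          rw [hγ (o + 1) (by omega)]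
          have : (o + 1) % 2 = 0 := by omega
          simp [this]
        rcases hEe : E with _ | ⟨e0, E'⟩
        · -- E empty : L = o :: ν
          rw [hEe] at hsplit
          rw [hsplit]
          simp only [List.nil_append, List.map_cons, List.prod_cons]
          rw [hmul, hSg, zero_mul, add_zero]
          exact mul_mem (Algebra.subset_adjoin (oddS o hopos (by omega))) hSν
        · -- E nonempty
          have hEne : E ≠ [] := by rw [hEe]; simp
          have hEeven : ∀ i ∈ E, i % 2 = 0 := by
            intro i hi
            rw [hE] at hi
            have := List.mem_takeWhile_imp hi
            simpa [hp] using this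
          have hEpos : ∀ i ∈ E, 1 ≤ i := by
            intro i hi
            apply hpos
            rw [hsplit]
            simp [hi]
          have hElen : E.length + 1 + ν.length = L.length := by
            have := congrArg List.length hsplit
            simp at this
            omega
          have hElen1 : 1 ≤ E.length := by rw [hEe]; simp
          set e : Gam := (E.map γ).prod with he
          set v : Gam := (ν.map γ).prod with hv
          set g : Gam := γ o with hg
          set g' : Gam := γ (o + 1) with hg'
          have key : Sq1 (e * (g * v)) = Sq1 e * Sq1 (g' * v) + Sq1 (e * g') * Sq1 v := by
            rw [hmul e (g * v), hmul g v, hmul g' v, hmul e g', hSg, hSg']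
            have hring : Sq1 e * (g' * Sq1 v + g * v) + (e * g + Sq1 e * g') * Sq1 v
                = e * (g * Sq1 v + 0 * v) + Sq1 e * (g * v)
                  + (Sq1 e * (g' * Sq1 v) + Sq1 e * (g' * Sq1 v)) := by
              noncomm_ring
            rw [hring, hxx, add_zero]
          have hprod : (L.map γ).prod = e * (g * v) := by
            rw [hsplit, List.map_append, List.prod_append, List.map_cons, List.prod_cons]
          rw [hprod, key]
          have h1' : Sq1 e ∈ S := evenS E hEne hEeven hEpos
          have h2' : Sq1 (e * g') ∈ S := by
            have : e * g' = ((E ++ [o + 1]).map γ).prod := by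
              rw [List.map_append, List.prod_append]
              simp [he, hg']
            rw [this]
            apply evenS
            · simp
            · intro i hi
              rcases List.mem_append.mp hi with h | h
              · exact hEeven i h
              · simp at h; omega
            · intro i hi
              rcases List.mem_append.mp hi with h | h
              · exact hEpos i h
              · simp at h; omega
          have h3' : Sq1 (g' * v) ∈ Algebra.adjoin (ZMod 2) S := by
            have : g' * v = (((o + 1) :: ν).map γ).prod := by
              simp [hg', hv]
            rw [this]
            apply ih
            · simp; omega
            · intro i hi
              rcases List.mem_cons.mp hi with h | h
              · omega
              · exact hνpos i h
          exact add_mem (mul_mem (Algebra.subset_adjoin h1') h3')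
            (mul_mem (Algebra.subset_adjoin h2') hSν)
  exact main L.length L le_rfl hL1

end
end

section
/- The kernel of Sq^1 : Γ̃ → Γ̃ equals the unital 𝔽₂-subalgebra of Γ̃ generated by the set S_0 = {σ(m_1,…,m_r) : r ≥ 1, m_1,…,m_r ≥ 0}. -/
noncomputable section

namespace KerSq1Aux

abbrev X' : Type := {k : ℕ // 1 ≤ k}
abbrev R2 := ZMod 2
abbrev ι' : X' → Gam := FreeAlgebra.ι R2

lemma γ_eq (a : X') : γ a.1 = ι' a := by
  rcases a with ⟨j, hj⟩; simp [γ, hj]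

lemma gadd_self (z : Gam) : z + z = 0 := by
  have : (2 : R2) = 0 := rfl
  rw [← two_smul R2 z, this, zero_smul]

def word (l : List X') : Gam := (l.map ι').prod

lemma word_nil : word [] = 1 := rfl

lemma word_cons (a : X') (t : List X') : word (a :: t) = ι' a * word t := by
  simp [word]

lemma word_append (l m : List X') : word (l ++ m) = word l * word m := by
  simp [word]

abbrev Eqv := FreeAlgebra.equivMonoidAlgebraFreeMonoid (R := R2) (X := X')

lemma eqv_iota (a : X') : Eqv (ι' a) = MonoidAlgebra.single (FreeMonoid.of a) 1 := by
  simp [FreeAlgebra.equivMonoidAlgebraFreeMonoid]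

lemma eqv_word (l : List X') :
    Eqv (word l) = MonoidAlgebra.single (FreeMonoid.ofList l) 1 := by
  induction l with
  | nil => simp [word]; rfl
  | cons a t ih =>
    rw [word_cons, map_mul, ih, eqv_iota, MonoidAlgebra.single_mul_single, one_mul]
    rfl

lemma mem_span_words (x : Gam) : x ∈ Submodule.span R2 (Set.range word) := by
  induction x using FreeAlgebra.induction with
  | grade0 r =>
    have : (algebraMap R2 Gam r) = r • word [] := by
      simp [word, Algebra.algebraMap_eq_smul_one]
    rw [this]; exact Submodule.smul_mem _ _ (Submodule.subset_span ⟨[], rfl⟩)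
  | grade1 a => exact Submodule.subset_span ⟨[a], by simp [word]⟩
  | mul a b ha hb =>
    refine Submodule.span_induction (p := fun a _ => a * b ∈ Submodule.span R2 (Set.range word))
      ?_ ?_ ?_ ?_ ha
    · rintro x ⟨l, rfl⟩
      refine Submodule.span_induction (p := fun b _ => word l * b ∈ Submodule.span R2 (Set.range word))
        ?_ ?_ ?_ ?_ hb
      · rintro y ⟨m, rfl⟩
        exact Submodule.subset_span ⟨l ++ m, word_append l m⟩
      · simp
      · intro u v _ _ hu hv; rw [mul_add]; exact Submodule.add_mem _ hu hv
      · intro c u _ hu; rw [mul_smul_comm]; exact Submodule.smul_mem _ _ hu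
    · simp
    · intro u v _ _ hu hv; rw [add_mul]; exact Submodule.add_mem _ hu hv
    · intro c u _ hu; rw [smul_mul_assoc]; exact Submodule.smul_mem _ _ hu
  | add a b ha hb => exact Submodule.add_mem _ ha hb

def sX : X' → Gam := fun a => if a.1 % 2 = 1 then ι' ⟨a.1 + 1, by omega⟩ else 0

def hword : List X' → Gam
  | [] => 0
  | a :: t => sX a * word t

def hmap : Gam →ₗ[R2] Gam :=
  (Finsupp.lift Gam R2 (FreeMonoid X') (fun m => hword m.toList)) ∘ₗ
    (MonoidAlgebra.coeffLinearEquiv R2).toLinearMap ∘ₗ Eqv.toLinearMap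

lemma hmap_word (l : List X') : hmap (word l) = hword l := by
  simp only [hmap, LinearMap.coe_comp, Function.comp_apply]
  erw [eqv_word l]
  erw [show MonoidAlgebra.coeffLinearEquiv R2 (MonoidAlgebra.single (FreeMonoid.ofList l) (1 : R2)) =
    Finsupp.single (FreeMonoid.ofList l) 1 from rfl]
  rw [Finsupp.lift_apply, Finsupp.sum_single_index (by simp), one_smul]
  rfl

lemma hmap_mul_iota (a : X') (y : Gam) : hmap (ι' a * y) = sX a * y := by
  refine Submodule.span_induction (p := fun y _ => hmap (ι' a * y) = sX a * y)
    ?_ ?_ ?_ ?_ (mem_span_words y)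
  · rintro y ⟨m, rfl⟩
    rw [← word_cons, hmap_word]; rfl
  · simp
  · intro u v _ _ hu hv; rw [mul_add, map_add, hu, hv, mul_add]
  · intro c u _ hu; rw [mul_smul_comm, map_smul, hu, mul_smul_comm]

section
variable (Sq1 : Gam →ₗ[R2] Gam)
  (hmul : ∀ x y : Gam, Sq1 (x * y) = x * Sq1 y + Sq1 x * y)
  (hγ : ∀ j : ℕ, 1 ≤ j → Sq1 (γ j) = if j % 2 = 0 then γ (j - 1) else 0)

/-- The generating set. -/
def S0 : Set Gam :=
  {y : Gam | ∃ m : List ℕ, m ≠ [] ∧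
    y = Sq1 ((m.map fun mi => γ (2 * mi + 2)).prod)}

include hmul in
lemma Sq1_one : Sq1 1 = 0 := by
  have h := hmul 1 1
  rw [mul_one, one_mul, mul_one] at h
  exact (add_eq_left.mp h.symm)

include hγ in
lemma Sq1_iota_odd (a : X') (ha : a.1 % 2 = 1) : Sq1 (ι' a) = 0 := by
  rw [← γ_eq, hγ a.1 a.2, if_neg (by omega)]

include hγ in
lemma Sq1_iota_even (a : X') (ha : a.1 % 2 = 0) :
    Sq1 (ι' a) = ι' ⟨a.1 - 1, by have := a.2; omega⟩ := by
  rw [← γ_eq, hγ a.1 a.2, if_pos ha]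
  exact γ_eq ⟨a.1 - 1, by have := a.2; omega⟩

include hmul hγ in
lemma Sq1_Sq1 (z : Gam) : Sq1 (Sq1 z) = 0 := by
  induction z using FreeAlgebra.induction with
  | grade0 r =>
    rw [Algebra.algebraMap_eq_smul_one, map_smul, Sq1_one Sq1 hmul, smul_zero, map_zero]
  | grade1 a =>
    rcases Nat.mod_two_eq_zero_or_one a.1 with ha | ha
    · rw [Sq1_iota_even Sq1 hγ a ha, Sq1_iota_odd Sq1 hγ _ (by have := a.2; simp; omega)]
    · rw [Sq1_iota_odd Sq1 hγ a ha, map_zero]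
  | mul a b ha hb =>
    rw [hmul, map_add, hmul, hmul, ha, hb, mul_zero, zero_mul, zero_add, add_zero]
    exact gadd_self _
  | add a b ha hb => rw [map_add, map_add, ha, hb, add_zero]

lemma all_even_mem (l : List X') (hne : l ≠ []) (hev : ∀ a ∈ l, a.1 % 2 = 0) :
    Sq1 (word l) ∈ S0 Sq1 := by
  refine ⟨l.map (fun a => a.1 / 2 - 1), fun h => hne (List.map_eq_nil_iff.mp h), ?_⟩
  have : ((l.map (fun a => a.1 / 2 - 1)).map fun mi => γ (2 * mi + 2)) = l.map ι' := by
    rw [List.map_map]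
    refine List.map_congr_left (fun a ha => ?_)
    have h2 := hev a ha
    have h1 := a.2
    have h3 : 2 * (a.1 / 2 - 1) + 2 = a.1 := by omega
    show γ (2 * (a.1 / 2 - 1) + 2) = ι' a
    rw [h3, γ_eq]
  rw [this]
  rfl

include hmul hγ in
lemma mem_A (n : ℕ) : ∀ (E l : List X'), E.length + l.length ≤ n →
    (∀ a ∈ E, a.1 % 2 = 0) →
    Sq1 (word (E ++ l)) ∈ Algebra.adjoin R2 (S0 Sq1) := by
  induction n with
  | zero =>
    intro E l hlen hE
    have hE0 : E = [] := by cases E <;> simp_all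
    have hl0 : l = [] := by cases l <;> simp_all
    subst hE0; subst hl0
    rw [show word ([] ++ [] : List X') = 1 from rfl, Sq1_one Sq1 hmul]
    exact Subalgebra.zero_mem _
  | succ n IH =>
    intro E l
    induction l generalizing E with
    | nil =>
      intro hlen hE
      rcases eq_or_ne E [] with rfl | hne
      · rw [show word ([] ++ [] : List X') = 1 from rfl, Sq1_one Sq1 hmul]
        exact Subalgebra.zero_mem _
      · rw [List.append_nil]
        exact Algebra.subset_adjoin (all_even_mem Sq1 E hne hE)
    | cons a t ih =>
      intro hlen hE
      rcases Nat.mod_two_eq_zero_or_one a.1 with ha | ha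
      · have hsplit : E ++ a :: t = (E ++ [a]) ++ t := by simp
        rw [hsplit]
        refine ih (E ++ [a]) ?_ ?_
        · simp only [List.length_append, List.length_cons, List.length_nil] at hlen ⊢
          omega
        · intro x hx
          rcases List.mem_append.mp hx with h | h
          · exact hE x h
          · simp only [List.mem_singleton] at h; subst h; exact ha
      · -- a odd
        set b : X' := ⟨a.1 + 1, by omega⟩ with hbdef
        have hb : b.1 % 2 = 0 := by simp only [hbdef]; omega
        have hSb : Sq1 (ι' b) = ι' a := by
          rw [Sq1_iota_even Sq1 hγ b hb]
          exact congrArg ι' (Subtype.ext (by simp only [hbdef]; omega))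
        have e2 : Sq1 (word (E ++ a :: t)) =
            word E * (ι' a * Sq1 (word t)) + Sq1 (word E) * (ι' a * word t) := by
          rw [word_append, word_cons, hmul, hmul, Sq1_iota_odd Sq1 hγ a ha, zero_mul, add_zero]
        have e3 : Sq1 (word (E ++ [b])) = word E * ι' a + Sq1 (word E) * ι' b := by
          rw [word_append, word_cons, word_nil, mul_one, hmul, hSb]
        have e4 : Sq1 (word (b :: t)) = ι' b * Sq1 (word t) + ι' a * word t := by
          rw [word_cons, hmul, hSb]
        have key : Sq1 (word (E ++ a :: t)) =
            Sq1 (word (E ++ [b])) * Sq1 (word t) + Sq1 (word E) * Sq1 (word (b :: t)) := by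
          rw [e2, e3, e4, add_mul, mul_add, mul_assoc, mul_assoc]
          rw [add_assoc, ← add_assoc (Sq1 (word E) * (ι' b * Sq1 (word t))), gadd_self, zero_add]
        rw [key]
        have m1 : Sq1 (word (E ++ [b])) ∈ Algebra.adjoin R2 (S0 Sq1) := by
          refine Algebra.subset_adjoin (all_even_mem Sq1 (E ++ [b]) (by simp) ?_)
          intro x hx
          rcases List.mem_append.mp hx with h | h
          · exact hE x h
          · simp only [List.mem_singleton] at h; subst h; exact hb
        have m2 : Sq1 (word t) ∈ Algebra.adjoin R2 (S0 Sq1) := by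
          have := IH [] t (by simp only [List.length_nil, List.length_cons, List.length_append] at hlen ⊢; omega) (by simp)
          simpa using this
        have m3 : Sq1 (word E) * Sq1 (word (b :: t)) ∈ Algebra.adjoin R2 (S0 Sq1) := by
          rcases eq_or_ne E [] with rfl | hne
          · rw [word_nil, Sq1_one Sq1 hmul, zero_mul]
            exact Subalgebra.zero_mem _
          · have hlenE : 1 ≤ E.length := List.length_pos_iff.mpr hne
            have t1 := Algebra.subset_adjoin (R := R2) (all_even_mem Sq1 E hne hE)
            have t2 := IH [] (b :: t) (by simp only [List.length_nil, List.length_cons,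
              List.length_append] at hlen ⊢; omega) (by simp)
            simp only [List.nil_append] at t2
            exact mul_mem t1 t2
        exact add_mem (mul_mem m1 m2) m3

lemma quad (u v : Gam) : u + (v + u) + v = 0 := by
  have h : u + (v + u) + v = (u + u) + (v + v) := by abel
  rw [h, gadd_self, gadd_self, add_zero]

include hmul hγ in
lemma imA (y : Gam) : Sq1 y ∈ Algebra.adjoin R2 (S0 Sq1) := by
  refine Submodule.span_induction
    (p := fun y _ => Sq1 y ∈ Algebra.adjoin R2 (S0 Sq1)) ?_ ?_ ?_ ?_ (mem_span_words y)
  · rintro y ⟨l, rfl⟩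
    have := mem_A Sq1 hmul hγ l.length [] l (by simp) (by simp)
    simpa using this
  · show Sq1 (0 : Gam) ∈ Algebra.adjoin R2 (S0 Sq1)
    rw [map_zero]; exact Subalgebra.zero_mem _
  · intro u v _ _ hu hv; rw [map_add]; exact add_mem hu hv
  · intro c u _ hu; rw [map_smul]; exact Subalgebra.smul_mem _ hu c

include hmul hγ in
lemma homA (x : Gam) :
    x + Sq1 (hmap x) + hmap (Sq1 x) ∈ Algebra.adjoin R2 (S0 Sq1) := by
  refine Submodule.span_induction
    (p := fun x _ => x + Sq1 (hmap x) + hmap (Sq1 x) ∈ Algebra.adjoin R2 (S0 Sq1))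
    ?_ ?_ ?_ ?_ (mem_span_words x)
  · rintro y ⟨l, rfl⟩
    cases l with
    | nil =>
      have h0 : hmap (word []) = 0 := hmap_word []
      rw [h0, map_zero, word_nil, Sq1_one Sq1 hmul, map_zero, add_zero, add_zero]
      exact Subalgebra.one_mem _
    | cons a t =>
      have hzero : word (a :: t) + Sq1 (hmap (word (a :: t))) + hmap (Sq1 (word (a :: t))) = 0 := by
        have hw : hmap (word (a :: t)) = sX a * word t := hmap_word (a :: t)
        have hd : Sq1 (word (a :: t)) = ι' a * Sq1 (word t) + Sq1 (ι' a) * word t := by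
          rw [word_cons, hmul]
        rcases Nat.mod_two_eq_zero_or_one a.1 with ha | ha
        · -- a even
          have hs : sX a = 0 := by simp only [sX]; rw [if_neg (by omega)]
          set c : X' := ⟨a.1 - 1, by have := a.2; omega⟩ with hcdef
          have hc : c.1 % 2 = 1 := by simp only [hcdef]; have := a.2; omega
          have hδ : Sq1 (ι' a) = ι' c := Sq1_iota_even Sq1 hγ a ha
          have hsc : sX c = ι' a := by
            simp only [sX]
            rw [if_pos hc]
            exact congrArg ι' (Subtype.ext (by simp only [hcdef]; have := a.2; omega))
          rw [hw, hs, zero_mul, map_zero, add_zero, hd, hδ, map_add, hmap_mul_iota, hs,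
            zero_mul, zero_add, hmap_mul_iota, hsc, word_cons]
          exact gadd_self _
        · -- a odd
          set b : X' := ⟨a.1 + 1, by omega⟩ with hbdef
          have hb : b.1 % 2 = 0 := by simp only [hbdef]; omega
          have hs : sX a = ι' b := by simp only [sX]; rw [if_pos ha]
          have hδ : Sq1 (ι' a) = 0 := Sq1_iota_odd Sq1 hγ a ha
          have hSb : Sq1 (ι' b) = ι' a := by
            rw [Sq1_iota_even Sq1 hγ b hb]
            exact congrArg ι' (Subtype.ext (by simp only [hbdef]; omega))
          rw [hw, hs, hd, hδ, zero_mul, add_zero, hmul, hSb, hmap_mul_iota, hs, word_cons]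
          exact quad _ _
      rw [hzero]
      exact Subalgebra.zero_mem _
  · show (0 : Gam) + Sq1 (hmap 0) + hmap (Sq1 0) ∈ Algebra.adjoin R2 (S0 Sq1)
    rw [map_zero, map_zero, map_zero, add_zero, add_zero]
    exact Subalgebra.zero_mem _
  · intro u v _ _ hu hv
    have h : (u + v) + Sq1 (hmap (u + v)) + hmap (Sq1 (u + v)) =
        (u + Sq1 (hmap u) + hmap (Sq1 u)) + (v + Sq1 (hmap v) + hmap (Sq1 v)) := by
      simp only [map_add]; abel
    rw [h]; exact add_mem hu hv
  · intro r u _ hu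
    have h : (r • u) + Sq1 (hmap (r • u)) + hmap (Sq1 (r • u)) =
        r • (u + Sq1 (hmap u) + hmap (Sq1 u)) := by
      simp only [map_smul, smul_add]
    rw [h]; exact Subalgebra.smul_mem _ hu r

end

end KerSq1Aux

/-- The kernel of Sq¹ equals the unital 𝔽₂-subalgebra of Γ̃ generated by
S₀ = {σ(m_1,…,m_r) : r ≥ 1, m_i ≥ 0}, where σ(m_1,…,m_r) = ([2m_1+2,…,2m_r+2])Sq¹.
Here Sq¹ is (any) 𝔽₂-linear derivation on Γ̃ with (γ_j)Sq¹ = γ_{j-1} for j even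
and 0 for j odd. -/
theorem ker_Sq1_eq_adjoin_S0
    (Sq1 : Gam →ₗ[ZMod 2] Gam)
    (hmul : ∀ x y : Gam, Sq1 (x * y) = x * Sq1 y + Sq1 x * y)
    (hγ : ∀ j : ℕ, 1 ≤ j → Sq1 (γ j) = if j % 2 = 0 then γ (j - 1) else 0)
    (x : Gam) :
    Sq1 x = 0 ↔ x ∈ Algebra.adjoin (ZMod 2)
      {y : Gam | ∃ m : List ℕ, m ≠ [] ∧
        y = Sq1 ((m.map fun mi => γ (2 * mi + 2)).prod)} := by
  constructor
  · intro hx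
    have H := KerSq1Aux.homA Sq1 hmul hγ x
    rw [hx, map_zero, add_zero] at H
    have H2 := KerSq1Aux.imA Sq1 hmul hγ (KerSq1Aux.hmap x)
    have hxeq : x = (x + Sq1 (KerSq1Aux.hmap x)) + Sq1 (KerSq1Aux.hmap x) := by
      rw [add_assoc, KerSq1Aux.gadd_self, add_zero]
    rw [hxeq]
    exact add_mem H H2
  · intro hx
    refine Algebra.adjoin_induction ?_ ?_ ?_ ?_ hx
    · rintro y ⟨m, hm, rfl⟩
      exact KerSq1Aux.Sq1_Sq1 Sq1 hmul hγ _
    · intro r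
      rw [Algebra.algebraMap_eq_smul_one, map_smul, KerSq1Aux.Sq1_one Sq1 hmul, smul_zero]
    · intro u v _ _ hu hv; rw [map_add, hu, hv, add_zero]
    · intro u v _ _ hu hv; rw [hmul, hu, hv, mul_zero, zero_mul, add_zero]

end
end

section
/- For every d ≥ 0, the dimension c_{2,d} = dim_{𝔽₂} Δ(0)_{2,d} equals d/2 if d is even and (d−1)/2 if d is odd. -/
noncomputable section

/-- Γ̃_{s,d}: the 𝔽₂-span of the monomials of length s and degree d. -/
def GammaSD (s d : ℕ) : Submodule (ZMod 2) Gam :=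
  Submodule.span (ZMod 2)
    {x | ∃ L : List ℕ, (∀ i ∈ L, 1 ≤ i) ∧ L.length = s ∧ L.sum = d ∧ x = (L.map γ).prod}

/-- c_{s,d} = dim_{𝔽₂} Δ(0)_{s,d}, where Δ(0)_{s,d} = ker(Sq¹) ∩ Γ̃_{s,d}. -/
def cdim (Sq1 : Gam →ₗ[ZMod 2] Gam) (s d : ℕ) : ℕ :=
  Module.finrank (ZMod 2) ↥(LinearMap.ker Sq1 ⊓ GammaSD s d)

namespace CdimAux

abbrev XX := {k : ℕ // 1 ≤ k}

abbrev BB : Module.Basis (FreeMonoid XX) (ZMod 2) Gam := FreeAlgebra.basisFreeMonoid (ZMod 2) XX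

def el (a : ℕ) : XX := ⟨max a 1, le_max_right _ _⟩

def wrd (a b : ℕ) : FreeMonoid XX := FreeMonoid.ofList [el a, el b]

lemma gam_eq (a : ℕ) (ha : 1 ≤ a) : γ a = FreeAlgebra.ι (ZMod 2) (el a) := by
  rw [γ, dif_pos ha]
  congr 1
  exact Subtype.ext (by simp [el]; omega)

lemma mono_eq (a b : ℕ) (ha : 1 ≤ a) (hb : 1 ≤ b) : γ a * γ b = BB (wrd a b) := by
  rw [gam_eq a ha, gam_eq b hb]
  have h : wrd a b = FreeMonoid.of (el a) * FreeMonoid.of (el b) := rfl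
  simp only [BB, FreeAlgebra.basisFreeMonoid, Module.Basis.map_apply, Finsupp.coe_basisSingleOne,
    AlgEquiv.toLinearEquiv_symm, AlgEquiv.toLinearEquiv_apply, h]
  erw [MonoidAlgebra.lift_single]
  simp

lemma wrd_inj {a b c e : ℕ} (ha : 1 ≤ a) (hb : 1 ≤ b) (hc : 1 ≤ c) (he : 1 ≤ e) :
    wrd a b = wrd c e ↔ a = c ∧ b = e := by
  constructor
  · intro h
    have h2 : ([el a, el b] : List XX) = [el c, el e] := FreeMonoid.ofList.injective h
    simp only [List.cons.injEq, and_true] at h2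
    obtain ⟨h3, h4⟩ := h2
    have h5 : max a 1 = max c 1 := congrArg Subtype.val h3
    have h6 : max b 1 = max e 1 := congrArg Subtype.val h4
    omega
  · rintro ⟨rfl, rfl⟩; rfl

lemma coord_mono (a b c e : ℕ) (ha : 1 ≤ a) (hb : 1 ≤ b) (hc : 1 ≤ c) (he : 1 ≤ e) :
    BB.coord (wrd a b) (γ c * γ e) = if c = a ∧ e = b then 1 else 0 := by
  classical
  rw [mono_eq c e hc he, Module.Basis.coord_apply, Module.Basis.repr_self, Finsupp.single_apply]
  by_cases h : c = a ∧ e = b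
  · rw [if_pos ((wrd_inj hc he ha hb).2 h), if_pos h]
  · rw [if_neg (fun hw => h ((wrd_inj hc he ha hb).1 hw)), if_neg h]

lemma indep_of_coords {ι : Type} [Fintype ι] [DecidableEq ι] (v : ι → Gam)
    (w : ι → FreeMonoid XX)
    (h : ∀ i j, BB.coord (w i) (v j) = if i = j then 1 else 0) :
    LinearIndependent (ZMod 2) v := by
  apply LinearIndependent.of_comp (LinearMap.pi fun i => BB.coord (w i))
  have he : (⇑(LinearMap.pi fun i => BB.coord (w i)) ∘ v) = ⇑(Pi.basisFun (ZMod 2) ι) := by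
    funext j
    funext i
    have h2 := h i j
    rw [Function.comp_apply, LinearMap.pi_apply, h2, Pi.basisFun_apply, Pi.single_apply]
  rw [he]
  exact (Pi.basisFun (ZMod 2) ι).linearIndependent

/-- independence of families γ_i γ_{g i}, indexed by the first entry. -/
lemma indep_pairs (S : Finset ℕ) (g : ℕ → ℕ) (h1 : ∀ i ∈ S, 1 ≤ i) (hg : ∀ i ∈ S, 1 ≤ g i) :
    LinearIndependent (ZMod 2) (fun i : S => γ (i : ℕ) * γ (g (i : ℕ))) := by
  classical
  apply indep_of_coords _ (fun i : S => wrd (i : ℕ) (g (i : ℕ)))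
  intro i j
  rw [coord_mono _ _ _ _ (h1 _ i.2) (hg _ i.2) (h1 _ j.2) (hg _ j.2)]
  by_cases hij : i = j
  · rw [if_pos hij, if_pos]; subst hij; exact ⟨rfl, rfl⟩
  · rw [if_neg hij, if_neg]
    rintro ⟨hh, -⟩
    exact hij (Subtype.ext hh.symm)

/-- independence of families γ_i γ_{g i} + γ_{i-1} γ_{g' i} when no `j - 1` is an `i`. -/
lemma indep_pairs2 (S : Finset ℕ) (g g' : ℕ → ℕ) (h1 : ∀ i ∈ S, 2 ≤ i)
    (hg : ∀ i ∈ S, 1 ≤ g i) (hg' : ∀ i ∈ S, 1 ≤ g' i)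
    (hne : ∀ i ∈ S, ∀ j ∈ S, ¬ (j - 1 = i)) :
    LinearIndependent (ZMod 2)
      (fun i : S => γ (i : ℕ) * γ (g (i : ℕ)) + γ ((i : ℕ) - 1) * γ (g' (i : ℕ))) := by
  classical
  apply indep_of_coords _ (fun i : S => wrd (i : ℕ) (g (i : ℕ)))
  intro i j
  rw [map_add, coord_mono _ _ _ _ (by have := h1 _ i.2; omega) (hg _ i.2)
      (by have := h1 _ j.2; omega) (hg _ j.2),
    coord_mono _ _ _ _ (by have := h1 _ i.2; omega) (hg _ i.2)
      (by have := h1 _ j.2; omega) (hg' _ j.2)]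
  have hz : (if ((j : ℕ) - 1 = (i : ℕ) ∧ g' (j : ℕ) = g (i : ℕ)) then (1 : ZMod 2) else 0) = 0 :=
    if_neg (by rintro ⟨hh, -⟩; exact hne _ i.2 _ j.2 hh)
  rw [hz, add_zero]
  by_cases hij : i = j
  · rw [if_pos hij, if_pos]; subst hij; exact ⟨rfl, rfl⟩
  · rw [if_neg hij, if_neg]
    rintro ⟨hh, -⟩
    exact hij (Subtype.ext hh.symm)

lemma card_odd (n : ℕ) : ((Finset.Ioo 0 n).filter (fun a => a % 2 = 1)).card = n / 2 := by
  induction n with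
  | zero => simp
  | succ n ih =>
    rcases Nat.eq_zero_or_pos n with rfl | hn
    · decide
    · have h1 : Finset.Ioo 0 (n + 1) = insert n (Finset.Ioo 0 n) := by
        rw [Finset.Ioo_insert_right hn]
        ext a; simp [Finset.mem_Ioo, Finset.mem_Ioc]
      rw [h1, Finset.filter_insert]
      by_cases hpar : n % 2 = 1
      · rw [if_pos hpar, Finset.card_insert_of_notMem (by simp), ih]
        omega
      · rw [if_neg hpar, ih]
        omega

lemma card_even (n : ℕ) : ((Finset.Ioo 1 n).filter (fun a => a % 2 = 0)).card = (n - 1) / 2 := by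
  induction n with
  | zero => simp
  | succ n ih =>
    rcases Nat.lt_or_ge n 2 with hn | hn
    · interval_cases n <;> decide
    · have h1 : Finset.Ioo 1 (n + 1) = insert n (Finset.Ioo 1 n) := by
        rw [Finset.Ioo_insert_right (by omega)]
        ext a; simp [Finset.mem_Ioo, Finset.mem_Ioc]
      rw [h1, Finset.filter_insert]
      by_cases hpar : n % 2 = 0
      · rw [if_pos hpar, Finset.card_insert_of_notMem (by simp), ih]
        omega
      · rw [if_neg hpar, ih]
        omega

end CdimAux

open CdimAux

/-- c_{2,d} = d/2 if d is even, (d-1)/2 if d is odd.  Here Sq¹ is (any)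
𝔽₂-linear derivation on Γ̃ with (γ_j)Sq¹ = γ_{j-1} for j even and 0 for j odd. -/
theorem cdim_two
    (Sq1 : Gam →ₗ[ZMod 2] Gam)
    (hmul : ∀ x y : Gam, Sq1 (x * y) = x * Sq1 y + Sq1 x * y)
    (hγ : ∀ j : ℕ, 1 ≤ j → Sq1 (γ j) = if j % 2 = 0 then γ (j - 1) else 0)
    (d : ℕ) :
    cdim Sq1 2 d = if d % 2 = 0 then d / 2 else (d - 1) / 2 := by
  classical
  have hspan : GammaSD 2 d = Submodule.span (ZMod 2)
      (Set.range (fun i : (Finset.Ioo 0 d) => γ (i : ℕ) * γ (d - (i : ℕ)))) := by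
    unfold GammaSD
    congr 1
    ext x
    constructor
    · rintro ⟨L, h1, h2, h3, rfl⟩
      rcases L with _ | ⟨a, _ | ⟨b, _ | ⟨c, L⟩⟩⟩ <;> simp at h2
      have ha : 1 ≤ a := h1 a (by simp)
      have hb : 1 ≤ b := h1 b (by simp)
      simp only [List.sum_cons, List.sum_nil, add_zero] at h3
      refine ⟨⟨a, Finset.mem_Ioo.2 ⟨by omega, by omega⟩⟩, ?_⟩
      have hba : d - a = b := by omega
      simp [hba]
    · rintro ⟨⟨i, hi⟩, rfl⟩
      rw [Finset.mem_Ioo] at hi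
      exact ⟨[i, d - i], by intro a ha; simp at ha; omega, by simp, by simp; omega, by simp⟩
  have hWfin : FiniteDimensional (ZMod 2) ↥(GammaSD 2 d) := by
    rw [hspan]
    exact FiniteDimensional.span_of_finite _ (Set.finite_range _)
  have hfam_indep : LinearIndependent (ZMod 2)
      (fun i : (Finset.Ioo 0 d) => γ (i : ℕ) * γ (d - (i : ℕ))) := by
    apply indep_pairs (Finset.Ioo 0 d) (fun i => d - i)
    · intro i hi; have := Finset.mem_Ioo.1 hi; omega
    · intro i hi; have := Finset.mem_Ioo.1 hi; omega
  have hWrank : Module.finrank (ZMod 2) ↥(GammaSD 2 d) = d - 1 := by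
    rw [hspan, finrank_span_eq_card hfam_indep, Fintype.card_coe, Nat.card_Ioo]
    omega
  have hsub : LinearMap.ker Sq1 ⊓ GammaSD 2 d =
      Submodule.map (GammaSD 2 d).subtype (LinearMap.ker (Sq1.domRestrict (GammaSD 2 d))) := by
    rw [LinearMap.ker_domRestrict, Submodule.map_comap_subtype, inf_comm]
  have hker : cdim Sq1 2 d =
      Module.finrank (ZMod 2) ↥(LinearMap.ker (Sq1.domRestrict (GammaSD 2 d))) := by
    rw [cdim, hsub, Submodule.finrank_map_subtype_eq]
  have hrn := LinearMap.finrank_range_add_finrank_ker (Sq1.domRestrict (GammaSD 2 d))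
  have hrange : LinearMap.range (Sq1.domRestrict (GammaSD 2 d)) =
      Submodule.span (ZMod 2)
        (Set.range (fun i : (Finset.Ioo 0 d) => Sq1 (γ (i : ℕ) * γ (d - (i : ℕ))))) := by
    rw [LinearMap.range_domRestrict, hspan, Submodule.map_span, ← Set.range_comp]
    rfl
  have sqm : ∀ a b : ℕ, 1 ≤ a → 1 ≤ b → Sq1 (γ a * γ b) =
      (if b % 2 = 0 then γ a * γ (b - 1) else 0) +
      (if a % 2 = 0 then γ (a - 1) * γ b else 0) := by
    intro a b ha hb
    rw [hmul, hγ a ha, hγ b hb]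
    split_ifs <;> simp
  rcases Nat.even_or_odd d with hd | hd
  · -- d even
    have hd2 : d % 2 = 0 := Nat.even_iff.1 hd
    have hspan2 : Submodule.span (ZMod 2)
        (Set.range (fun i : (Finset.Ioo 0 d) => Sq1 (γ (i : ℕ) * γ (d - (i : ℕ))))) =
        Submodule.span (ZMod 2)
          (Set.range (fun i : ((Finset.Ioo 1 (d - 1)).filter (fun a => a % 2 = 0)) =>
            γ (i : ℕ) * γ (d - 1 - (i : ℕ)) + γ ((i : ℕ) - 1) * γ (d - (i : ℕ)))) := by
      apply le_antisymm <;> rw [Submodule.span_le]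
      · rintro x ⟨i, rfl⟩
        have hi := Finset.mem_Ioo.1 i.2
        by_cases hpar : (i : ℕ) % 2 = 0
        · have hiES : (i : ℕ) ∈ (Finset.Ioo 1 (d - 1)).filter (fun a => a % 2 = 0) := by
            rw [Finset.mem_filter, Finset.mem_Ioo]
            exact ⟨⟨by omega, by omega⟩, hpar⟩
          apply Submodule.subset_span
          refine ⟨⟨(i : ℕ), hiES⟩, ?_⟩
          show γ (i : ℕ) * γ (d - 1 - (i : ℕ)) + γ ((i : ℕ) - 1) * γ (d - (i : ℕ)) =
            Sq1 (γ (i : ℕ) * γ (d - (i : ℕ)))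
          rw [sqm _ _ (by omega) (by omega), if_pos (by omega), if_pos hpar,
            show d - (i : ℕ) - 1 = d - 1 - (i : ℕ) from by omega]
        · have hz : Sq1 (γ (i : ℕ) * γ (d - (i : ℕ))) = 0 := by
            rw [sqm _ _ (by omega) (by omega), if_neg (by omega), if_neg (by omega), add_zero]
          show Sq1 (γ (i : ℕ) * γ (d - (i : ℕ))) ∈ _
          rw [hz]
          exact Submodule.zero_mem _
      · rintro x ⟨i, rfl⟩
        have hi := Finset.mem_filter.1 i.2
        have hi2 := Finset.mem_Ioo.1 hi.1
        apply Submodule.subset_span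
        refine ⟨⟨(i : ℕ), Finset.mem_Ioo.2 ⟨by omega, by omega⟩⟩, ?_⟩
        show Sq1 (γ (i : ℕ) * γ (d - (i : ℕ))) =
          γ (i : ℕ) * γ (d - 1 - (i : ℕ)) + γ ((i : ℕ) - 1) * γ (d - (i : ℕ))
        rw [sqm _ _ (by omega) (by omega), if_pos (by omega), if_pos hi.2,
          show d - (i : ℕ) - 1 = d - 1 - (i : ℕ) from by omega]
    have htindep : LinearIndependent (ZMod 2)
        (fun i : ((Finset.Ioo 1 (d - 1)).filter (fun a => a % 2 = 0)) =>
          γ (i : ℕ) * γ (d - 1 - (i : ℕ)) + γ ((i : ℕ) - 1) * γ (d - (i : ℕ))) := by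
      apply indep_pairs2 _ (fun i => d - 1 - i) (fun i => d - i)
      · intro i hi; have := Finset.mem_Ioo.1 (Finset.mem_filter.1 hi).1; omega
      · intro i hi; have := Finset.mem_Ioo.1 (Finset.mem_filter.1 hi).1; omega
      · intro i hi; have := Finset.mem_Ioo.1 (Finset.mem_filter.1 hi).1; omega
      · intro i hi j hj
        have h1 := Finset.mem_filter.1 hi
        have h2 := Finset.mem_filter.1 hj
        have := (Finset.mem_Ioo.1 h1.1)
        have := (Finset.mem_Ioo.1 h2.1)
        omega
    have hrank : Module.finrank (ZMod 2)
        ↥(LinearMap.range (Sq1.domRestrict (GammaSD 2 d))) = (d - 2) / 2 := by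
      rw [hrange, hspan2, finrank_span_eq_card htindep, Fintype.card_coe, card_even]
      omega
    rw [hker, if_pos hd2]
    omega
  · -- d odd
    have hd2 : d % 2 = 1 := Nat.odd_iff.1 hd
    have hspan2 : Submodule.span (ZMod 2)
        (Set.range (fun i : (Finset.Ioo 0 d) => Sq1 (γ (i : ℕ) * γ (d - (i : ℕ))))) =
        Submodule.span (ZMod 2)
          (Set.range (fun a : ((Finset.Ioo 0 (d - 1)).filter (fun a => a % 2 = 1)) =>
            γ (a : ℕ) * γ (d - 1 - (a : ℕ)))) := by
      apply le_antisymm <;> rw [Submodule.span_le]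
      · rintro x ⟨i, rfl⟩
        have hi := Finset.mem_Ioo.1 i.2
        apply Submodule.subset_span
        by_cases hpar : (i : ℕ) % 2 = 0
        · have hiOS : (i : ℕ) - 1 ∈ (Finset.Ioo 0 (d - 1)).filter (fun a => a % 2 = 1) := by
            rw [Finset.mem_filter, Finset.mem_Ioo]
            exact ⟨⟨by omega, by omega⟩, by omega⟩
          refine ⟨⟨(i : ℕ) - 1, hiOS⟩, ?_⟩
          show γ ((i : ℕ) - 1) * γ (d - 1 - ((i : ℕ) - 1)) = Sq1 (γ (i : ℕ) * γ (d - (i : ℕ)))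
          rw [sqm _ _ (by omega) (by omega), if_neg (by omega), if_pos hpar, zero_add,
            show d - 1 - ((i : ℕ) - 1) = d - (i : ℕ) from by omega]
        · have hiOS : (i : ℕ) ∈ (Finset.Ioo 0 (d - 1)).filter (fun a => a % 2 = 1) := by
            rw [Finset.mem_filter, Finset.mem_Ioo]
            exact ⟨⟨by omega, by omega⟩, by omega⟩
          refine ⟨⟨(i : ℕ), hiOS⟩, ?_⟩
          show γ (i : ℕ) * γ (d - 1 - (i : ℕ)) = Sq1 (γ (i : ℕ) * γ (d - (i : ℕ)))
          rw [sqm _ _ (by omega) (by omega), if_pos (by omega), if_neg hpar, add_zero,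
            show d - (i : ℕ) - 1 = d - 1 - (i : ℕ) from by omega]
      · rintro x ⟨a, rfl⟩
        have ha := Finset.mem_filter.1 a.2
        have ha2 := Finset.mem_Ioo.1 ha.1
        apply Submodule.subset_span
        refine ⟨⟨(a : ℕ), Finset.mem_Ioo.2 ⟨by omega, by omega⟩⟩, ?_⟩
        show Sq1 (γ (a : ℕ) * γ (d - (a : ℕ))) = γ (a : ℕ) * γ (d - 1 - (a : ℕ))
        rw [sqm _ _ (by omega) (by omega), if_pos (by omega), if_neg (by omega), add_zero,
          show d - (a : ℕ) - 1 = d - 1 - (a : ℕ) from by omega]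
    have htindep : LinearIndependent (ZMod 2)
        (fun a : ((Finset.Ioo 0 (d - 1)).filter (fun a => a % 2 = 1)) =>
          γ (a : ℕ) * γ (d - 1 - (a : ℕ))) := by
      apply indep_pairs _ (fun a => d - 1 - a)
      · intro i hi; have := Finset.mem_Ioo.1 (Finset.mem_filter.1 hi).1; omega
      · intro i hi; have := Finset.mem_Ioo.1 (Finset.mem_filter.1 hi).1; omega
    have hrank : Module.finrank (ZMod 2)
        ↥(LinearMap.range (Sq1.domRestrict (GammaSD 2 d))) = (d - 1) / 2 := by
      rw [hrange, hspan2, finrank_span_eq_card htindep, Fintype.card_coe, card_odd]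
    rw [hker, if_neg (by omega)]
    omega

end
end

section
/- Let k ≥ 0 and s, d ≥ 0 with d < 2^{k+2}. If x ∈ Γ̃_{s,d} satisfies (x)Sq^{2^i} = 0 for all 0 ≤ i ≤ k, then (x)Sq^n = 0 for every n ≥ 1; that is, in total degrees d < 2^{k+2} the k partially 𝒜-annihilated elements coincide with the totally 𝒜-annihilated elements: Δ(k)_{s,d} = Γ̃^{𝒜}_{s,d}. -/
noncomputable section

/-- The total Steenrod operation T : Γ̃ → Γ̃[t], the 𝔽₂-algebra homomorphism
with T(γ_j) = Σ_{n=0}^{j-1} (C(j-n, n) mod 2) · γ_{j-n} · t^n. -/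
def T : Gam →ₐ[ZMod 2] Polynomial Gam :=
  FreeAlgebra.lift (ZMod 2) fun j : {k : ℕ // 1 ≤ k} =>
    ∑ n ∈ Finset.range j.1,
      ((Nat.choose (j.1 - n) n : ZMod 2)) • (Polynomial.C (γ (j.1 - n)) * Polynomial.X ^ n)

/-- The right Steenrod operation (x)Sq^n := coefficient of t^n in T(x). -/
def Sq (n : ℕ) (x : Gam) : Gam := (T x).coeff n

/-- Δ(k): the k partially 𝒜-annihilated elements. -/
def DeltaSet (k : ℕ) : Set Gam := {x | ∀ i ≤ k, Sq (2 ^ i) x = 0}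

namespace BMaux

open Polynomial Finset

lemma Sq_add (n : ℕ) (x y : Gam) : Sq n (x + y) = Sq n x + Sq n y := by
  simp [Sq, map_add, Polynomial.coeff_add]

lemma Sq_zero (n : ℕ) : Sq n (0 : Gam) = 0 := by simp [Sq]

lemma Sq_smul (n : ℕ) (c : ZMod 2) (x : Gam) : Sq n (c • x) = c • Sq n x := by
  simp [Sq, map_smul, Polynomial.coeff_smul]

lemma T_γ (j : ℕ) (hj : 1 ≤ j) :
    T (γ j) = ∑ n ∈ Finset.range j,
      ((Nat.choose (j - n) n : ZMod 2)) • (Polynomial.C (γ (j - n)) * Polynomial.X ^ n) := by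
  rw [γ, dif_pos hj, T, FreeAlgebra.lift_ι_apply]

lemma coeff_T_γ (j p : ℕ) : (T (γ j)).coeff p = ((j - p).choose p : ZMod 2) • γ (j - p) := by
  by_cases hj : 1 ≤ j
  · rw [T_γ j hj]
    rw [Polynomial.finset_sum_coeff]
    have : ∀ n ∈ Finset.range j,
        (((Nat.choose (j - n) n : ZMod 2)) • (Polynomial.C (γ (j - n)) * Polynomial.X ^ n)).coeff p
        = if p = n then ((j - n).choose n : ZMod 2) • γ (j - n) else 0 := by
      intro n _
      rw [Polynomial.coeff_smul, Polynomial.coeff_C_mul, Polynomial.coeff_X_pow]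
      by_cases h : p = n <;> simp [h]
    rw [Finset.sum_congr rfl this, Finset.sum_ite_eq]
    by_cases hp : p ∈ Finset.range j
    · simp [hp]
    · rw [if_neg hp]
      have : j - p = 0 := by simp at hp; omega
      simp [this, γ]
  · have : j = 0 := by omega
    subst this
    simp [γ, Sq]

lemma Sq_id (x : Gam) : Sq 0 x = x := by
  induction x using FreeAlgebra.induction with
  | grade0 r =>
    have : T (algebraMap (ZMod 2) Gam r) = algebraMap (ZMod 2) (Polynomial Gam) r :=
      T.commutes r
    simp only [Sq, this]
    rw [Polynomial.algebraMap_apply]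
    simp
  | grade1 v =>
    have hv : γ v.1 = FreeAlgebra.ι (ZMod 2) v := by
      rw [γ, dif_pos v.2]
    rw [Sq, ← hv, coeff_T_γ]
    simp
  | mul a b ha hb =>
    simp only [Sq, map_mul, Polynomial.mul_coeff_zero]
    rw [← Sq, ← Sq, ha, hb]
  | add a b ha hb =>
    rw [Sq_add, ha, hb]

lemma T_coeff_eq_zero_of_lt (L : List ℕ) (n : ℕ) (h : L.sum < 2 * n) :
    (T ((L.map γ).prod)).coeff n = 0 := by
  induction L generalizing n with
  | nil =>
    simp only [List.map_nil, List.prod_nil, map_one]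
    have : n ≠ 0 := by simp at h; omega
    simp [Polynomial.coeff_one, this]
  | cons j L ih =>
    simp only [List.map_cons, List.prod_cons, map_mul]
    rw [Polynomial.coeff_mul]
    apply Finset.sum_eq_zero
    intro ⟨p, q⟩ hpq
    rw [Finset.HasAntidiagonal.mem_antidiagonal] at hpq
    simp only []
    by_cases hq : L.sum < 2 * q
    · rw [ih q hq, mul_zero]
    · have hp : j < 2 * p := by simp at h; omega
      rw [coeff_T_γ]
      by_cases hjp : j ≤ p
      · have : j - p = 0 := by omega
        simp [this, γ]
      · have : j - p < p := by omega
        rw [Nat.choose_eq_zero_of_lt this]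
        simp

lemma Sq_vanish_of_degree {s d : ℕ} {x : Gam} (hx : x ∈ GammaSD s d) (n : ℕ) (h : d < 2 * n) :
    Sq n x = 0 := by
  refine Submodule.span_induction ?_ ?_ ?_ ?_ hx
  · rintro y ⟨L, -, -, hsum, rfl⟩
    exact T_coeff_eq_zero_of_lt L n (by omega)
  · exact Sq_zero n
  · intro a b _ _ ha hb
    rw [Sq_add, ha, hb, add_zero]
  · intro c a _ ha
    rw [Sq_smul, ha, smul_zero]


abbrev S : Type := Polynomial (Polynomial (ZMod 2))

lemma two_eq_zero_S : (2 : S) = 0 := by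
  have h := CharP.cast_eq_zero S 2
  exact_mod_cast h

def HH (p r : ℕ) (A B : S) : S :=
  ∑ m ∈ Finset.range (r+1),
    (((p.choose m : ℕ) : S) * (((p+m).choose (r-m) : ℕ) : S)) * (B^m * A^(r-m))

def EE (p : ℕ) (A B : S) : Polynomial S :=
  ((1 + Polynomial.C A * Polynomial.X) *
   (1 + Polynomial.C B * Polynomial.X * (1 + Polynomial.C A * Polynomial.X)))^p

lemma one_add_pow (A : S) (K : ℕ) :
    (1 + Polynomial.C A * Polynomial.X)^K
      = ∑ m ∈ Finset.range (K+1),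
          Polynomial.C (((K.choose m : ℕ) : S) * A ^ m) * Polynomial.X ^ m := by
  have h := add_pow (Polynomial.C A * Polynomial.X) 1 K
  rw [add_comm (1 : Polynomial S), h]
  apply Finset.sum_congr rfl
  intro m _
  rw [← Polynomial.C_eq_natCast]
  simp only [Polynomial.C_mul, Polynomial.C_pow]
  ring

lemma one_add_pow_coeff (A : S) (K i : ℕ) :
    ((1 + Polynomial.C A * Polynomial.X)^K).coeff i = ((K.choose i : ℕ) : S) * A ^ i := by
  rw [one_add_pow, Polynomial.finset_sum_coeff]
  have : ∀ m ∈ Finset.range (K+1),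
      (Polynomial.C (((K.choose m : ℕ) : S) * A ^ m) * Polynomial.X ^ m).coeff i
      = if i = m then ((K.choose m : ℕ) : S) * A ^ m else 0 := by
    intro m _
    rw [Polynomial.coeff_C_mul, Polynomial.coeff_X_pow]
    by_cases h : i = m <;> simp [h]
  rw [Finset.sum_congr rfl this, Finset.sum_ite_eq]
  by_cases hi : i ∈ Finset.range (K+1)
  · simp [hi]
  · rw [if_neg hi]
    simp only [Finset.mem_range] at hi
    rw [Nat.choose_eq_zero_of_lt (by omega)]
    simp

lemma EE_coeff (p r : ℕ) (A B : S) : (EE p A B).coeff r = HH p r A B := by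
  have hW : EE p A B = ((Polynomial.C B * Polynomial.X * (1 + Polynomial.C A * Polynomial.X)^2)
      + (1 + Polynomial.C A * Polynomial.X))^p := by
    rw [EE]; ring
  have hap := add_pow (Polynomial.C B * Polynomial.X * (1 + Polynomial.C A * Polynomial.X)^2)
    (1 + Polynomial.C A * Polynomial.X) p
  rw [hW, hap]
  have step : ∀ m ∈ Finset.range (p+1),
      (Polynomial.C B * Polynomial.X * (1 + Polynomial.C A * Polynomial.X)^2)^m
        * (1 + Polynomial.C A * Polynomial.X)^(p - m) * (p.choose m : Polynomial S)
      = Polynomial.C (((p.choose m : ℕ) : S) * B ^ m)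
          * (Polynomial.X ^ m * (1 + Polynomial.C A * Polynomial.X)^(p + m)) := by
    intro m hm
    simp only [Finset.mem_range] at hm
    have hpm : 2 * m + (p - m) = p + m := by omega
    have e1 := mul_pow (Polynomial.C B * Polynomial.X)
      ((1 + Polynomial.C A * Polynomial.X)^2) m
    have e2 := mul_pow (Polynomial.C B) Polynomial.X m
    have e3 := pow_mul (1 + Polynomial.C A * Polynomial.X) 2 m
    rw [e1, e2, ← e3, ← hpm, pow_add, ← Polynomial.C_eq_natCast]
    simp only [Polynomial.C_mul, Polynomial.C_pow]
    ring
  rw [Finset.sum_congr rfl step, Polynomial.finset_sum_coeff]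
  have step2 : ∀ m ∈ Finset.range (p+1),
      (Polynomial.C (((p.choose m : ℕ) : S) * B ^ m)
          * (Polynomial.X ^ m * (1 + Polynomial.C A * Polynomial.X)^(p + m))).coeff r
      = if m ≤ r then (((p.choose m : ℕ) : S) * (((p+m).choose (r-m) : ℕ) : S)) * (B^m * A^(r-m))
        else 0 := by
    intro m _
    rw [Polynomial.coeff_C_mul, Polynomial.coeff_X_pow_mul']
    by_cases h : m ≤ r
    · rw [if_pos h, if_pos h, one_add_pow_coeff]
      ring
    · rw [if_neg h, if_neg h, mul_zero]
  rw [Finset.sum_congr rfl step2]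
  set G : ℕ → S := fun m =>
    if m ≤ r then (((p.choose m : ℕ) : S) * (((p+m).choose (r-m) : ℕ) : S)) * (B^m * A^(r-m))
    else 0 with hG
  have h1 : ∑ m ∈ Finset.range (p+1), G m = ∑ m ∈ Finset.range (p+r+2), G m := by
    apply Finset.sum_subset
    · intro m hm; simp only [Finset.mem_range] at *; omega
    · intro m _ hm
      simp only [Finset.mem_range, not_lt] at hm
      rw [hG]
      simp only []
      rw [Nat.choose_eq_zero_of_lt (by omega : p < m)]
      by_cases h : m ≤ r <;> simp [h]
  have h2 : HH p r A B = ∑ m ∈ Finset.range (p+r+2), G m := by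
    rw [HH]
    rw [Finset.sum_congr rfl (fun m hm => ?_)]
    · apply Finset.sum_subset
      · intro m hm; simp only [Finset.mem_range] at *; omega
      · intro m _ hm
        simp only [Finset.mem_range, not_lt] at hm
        rw [hG]; simp only []
        rw [if_neg (by omega)]
    · rw [hG]; simp only []
      simp only [Finset.mem_range] at hm
      rw [if_pos (by omega)]
  rw [h1, h2]

lemma EE_symm (p : ℕ) :
    EE p (Polynomial.X^2 + Polynomial.X * Polynomial.C Polynomial.X)
         ((Polynomial.C Polynomial.X)^2)
    = EE p ((Polynomial.C Polynomial.X)^2 + Polynomial.X * Polynomial.C Polynomial.X)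
         (Polynomial.X^2) := by
  have h2 : (2 : Polynomial S) = 0 := by
    have h := CharP.cast_eq_zero (Polynomial S) 2
    exact_mod_cast h
  have key : ∀ A B : S,
      (1 + Polynomial.C A * Polynomial.X) *
        (1 + Polynomial.C B * Polynomial.X * (1 + Polynomial.C A * Polynomial.X))
      = 1 + Polynomial.C (A + B) * Polynomial.X + Polynomial.C (A^2*B) * Polynomial.X^3 := by
    intro A B
    have expand : (1 + Polynomial.C A * Polynomial.X) *
        (1 + Polynomial.C B * Polynomial.X * (1 + Polynomial.C A * Polynomial.X))
        = (1 + Polynomial.C (A + B) * Polynomial.X + Polynomial.C (A^2*B) * Polynomial.X^3)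
          + (Polynomial.C A * Polynomial.C B * Polynomial.X^2) * 2 := by
      simp only [Polynomial.C_add, Polynomial.C_mul, Polynomial.C_pow]
      ring
    rw [expand, h2, mul_zero, add_zero]
  have hsum : (Polynomial.X^2 + Polynomial.X * Polynomial.C Polynomial.X : S)
      + (Polynomial.C Polynomial.X)^2
      = ((Polynomial.C Polynomial.X)^2 + Polynomial.X * Polynomial.C Polynomial.X : S)
      + Polynomial.X^2 := by ring
  have hprod : ((Polynomial.X^2 + Polynomial.X * Polynomial.C Polynomial.X : S))^2
      * ((Polynomial.C Polynomial.X)^2)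
      = (((Polynomial.C Polynomial.X)^2 + Polynomial.X * Polynomial.C Polynomial.X : S))^2
      * (Polynomial.X^2) := by ring
  rw [EE, EE, key, key, hsum, hprod]

lemma HH_symm (p r : ℕ) :
    HH p r (Polynomial.X^2 + Polynomial.X * Polynomial.C Polynomial.X)
         ((Polynomial.C Polynomial.X)^2)
    = HH p r ((Polynomial.C Polynomial.X)^2 + Polynomial.X * Polynomial.C Polynomial.X)
         (Polynomial.X^2) := by
  rw [← EE_coeff, ← EE_coeff, EE_symm]


abbrev Q2 : Type := Polynomial (Polynomial Gam)

def CC : Gam →ₐ[ZMod 2] Q2 := Polynomial.CAlgHom.comp Polynomial.CAlgHom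

def ψ : S →ₐ[ZMod 2] Q2 :=
  Polynomial.mapAlgHom (Polynomial.mapAlgHom (Algebra.ofId (ZMod 2) Gam))

lemma commute_C_of {R : Type*} [Semiring R] {z : R} (hz : ∀ w, Commute w z)
    (y : Polynomial R) : Commute y (Polynomial.C z) := by
  induction y using Polynomial.induction_on' with
  | add p q hp hq => exact hp.add_left hq
  | monomial n a =>
    show _ * _ = _ * _
    rw [Polynomial.monomial_mul_C, Polynomial.C_mul_monomial, (hz a).eq]

lemma commute_inner (a : Polynomial (ZMod 2)) (w : Polynomial Gam) :
    Commute w (Polynomial.map (algebraMap (ZMod 2) Gam) a) := by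
  induction a using Polynomial.induction_on' with
  | add p q hp hq => rw [Polynomial.map_add]; exact hp.add_right hq
  | monomial n c =>
    rw [Polynomial.map_monomial, ← Polynomial.C_mul_X_pow_eq_monomial]
    refine Commute.mul_right ?_ ((Polynomial.commute_X_pow w n).symm)
    exact commute_C_of (fun g => (Algebra.commutes c g).symm) w

lemma commute_psi (u : S) (y : Q2) : Commute y (ψ u) := by
  induction u using Polynomial.induction_on' with
  | add p q hp hq => rw [map_add]; exact hp.add_right hq
  | monomial n a =>
    have : ψ ((Polynomial.monomial n) a)
        = Polynomial.C (Polynomial.map (algebraMap (ZMod 2) Gam) a) * Polynomial.X ^ n := by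
      show Polynomial.map _ _ = _
      rw [Polynomial.map_monomial, ← Polynomial.C_mul_X_pow_eq_monomial]
      rfl
    rw [this]
    refine Commute.mul_right ?_ ((Polynomial.commute_X_pow y n).symm)
    exact commute_C_of (fun w => commute_inner a w) y

def σin (Bq : S) : Polynomial Gam →ₐ[ZMod 2] Q2 :=
  Polynomial.eval₂AlgHom CC (ψ Bq) (fun g => commute_psi Bq (CC g))

def σfull (Aq Bq : S) : Polynomial (Polynomial Gam) →ₐ[ZMod 2] Q2 :=
  Polynomial.eval₂AlgHom (σin Bq) (ψ Aq) (fun f => commute_psi Aq (σin Bq f))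

def T2 : Gam →ₐ[ZMod 2] Polynomial (Polynomial Gam) := (Polynomial.mapAlgHom T).comp T

lemma T2_coeff (x : Gam) (n m : ℕ) : ((T2 x).coeff n).coeff m = Sq m (Sq n x) := by
  show ((Polynomial.mapAlgHom T (T x)).coeff n).coeff m = _
  rw [Polynomial.coe_mapAlgHom, Polynomial.coeff_map]
  rfl

lemma sigma_C_mul_X_pow (Aq Bq : S) (f : Polynomial Gam) (n : ℕ) :
    σfull Aq Bq (Polynomial.C f * Polynomial.X ^ n) = σin Bq f * (ψ Aq) ^ n := by
  rw [map_mul, map_pow]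
  congr 1
  · exact Polynomial.eval₂_C _ _
  · congr 1
    exact Polynomial.eval₂_X _ _

lemma sigin_C_mul_X_pow (Bq : S) (g : Gam) (m : ℕ) :
    σin Bq (Polynomial.C g * Polynomial.X ^ m) = CC g * (ψ Bq) ^ m := by
  rw [map_mul, map_pow]
  congr 1
  · exact Polynomial.eval₂_C _ _
  · congr 1
    exact Polynomial.eval₂_X _ _

lemma cast_smul_Q2 (N : ℕ) (y : Q2) : ((N : ZMod 2)) • y = ((N : ℕ) : Q2) * y := by
  rw [Algebra.smul_def, map_natCast]

lemma psi_HH (p r : ℕ) (Aq Bq : S) :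
    ψ (HH p r Aq Bq) = ∑ m ∈ Finset.range (r+1),
      ((p.choose m * (p+m).choose (r-m) : ℕ) : Q2) * ((ψ Bq)^m * (ψ Aq)^(r-m)) := by
  rw [HH, map_sum]
  refine Finset.sum_congr rfl fun m _ => ?_
  rw [map_mul, map_mul, map_mul, map_pow, map_pow, map_natCast, map_natCast, Nat.cast_mul]

lemma sigma_T2_gen (Aq Bq : S) (j : ℕ) :
    σfull Aq Bq (T2 (γ j)) =
      ∑ p ∈ Finset.range (j+1), CC (γ p) * ψ (HH p (j-p) Aq Bq) := by
  by_cases hj : 1 ≤ j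
  swap
  · have hj0 : j = 0 := by omega
    subst hj0
    have : γ 0 = 0 := by rw [γ, dif_neg]; omega
    have hz : σfull Aq Bq (T2 (γ 0)) = 0 := by rw [this, map_zero, map_zero]
    rw [hz, show (0:ℕ)+1 = 1 from rfl, Finset.sum_range_one, this, map_zero, zero_mul]
  -- expand LHS
  have e1 : T2 (γ j) = ∑ n ∈ Finset.range j,
      ((Nat.choose (j - n) n : ZMod 2)) • (Polynomial.C (T (γ (j - n))) * Polynomial.X ^ n) := by
    show Polynomial.mapAlgHom T (T (γ j)) = _
    rw [T_γ j hj, map_sum]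
    refine Finset.sum_congr rfl fun n _ => ?_
    rw [map_smul]
    congr 1
    rw [Polynomial.coe_mapAlgHom, Polynomial.map_mul, Polynomial.map_C, Polynomial.map_pow,
      Polynomial.map_X]
    rfl
  have e2 : σfull Aq Bq (T2 (γ j)) = ∑ n ∈ Finset.range j, ∑ m ∈ Finset.range (j - n),
      (((j-n).choose n * (j-n-m).choose m : ℕ) : Q2)
        * (CC (γ (j-n-m)) * ((ψ Bq)^m * (ψ Aq)^n)) := by
    rw [e1, map_sum]
    refine Finset.sum_congr rfl fun n hn => ?_
    rw [map_smul, sigma_C_mul_X_pow]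
    have hn' : n < j := Finset.mem_range.mp hn
    have eT : σin Bq (T (γ (j - n))) = ∑ m ∈ Finset.range (j - n),
        ((Nat.choose (j - n - m) m : ZMod 2)) • (CC (γ (j - n - m)) * (ψ Bq) ^ m) := by
      rw [T_γ (j - n) (by omega), map_sum]
      refine Finset.sum_congr rfl fun m _ => ?_
      rw [map_smul, sigin_C_mul_X_pow]
    rw [eT, Finset.sum_mul, Finset.smul_sum]
    refine Finset.sum_congr rfl fun m _ => ?_
    rw [smul_mul_assoc, smul_smul, ← Nat.cast_mul, cast_smul_Q2, mul_assoc]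
  rw [e2]
  -- expand RHS
  have e3 : ∀ p ∈ Finset.range (j+1), CC (γ p) * ψ (HH p (j-p) Aq Bq)
      = ∑ m ∈ Finset.range (j - p + 1),
        ((p.choose m * (p+m).choose (j-p-m) : ℕ) : Q2)
          * (CC (γ p) * ((ψ Bq)^m * (ψ Aq)^(j-p-m))) := by
    intro p _
    rw [psi_HH, Finset.mul_sum]
    refine Finset.sum_congr rfl fun m _ => ?_
    rw [← mul_assoc, ← (Nat.cast_commute (p.choose m * (p+m).choose (j-p-m) : ℕ) (CC (γ p))).eq,
      mul_assoc]
  rw [Finset.sum_congr rfl e3]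
  -- reindex
  refine Eq.trans (Finset.sum_sigma (Finset.range j) (fun n => Finset.range (j - n))
    (fun x => (((j-x.1).choose x.1 * (j-x.1-x.2).choose x.2 : ℕ) : Q2)
      * (CC (γ (j-x.1-x.2)) * ((ψ Bq)^x.2 * (ψ Aq)^x.1)))).symm ?_
  refine Eq.trans ?_ (Finset.sum_sigma (Finset.range (j+1)) (fun p => Finset.range (j - p + 1))
    (fun x => ((x.1.choose x.2 * (x.1+x.2).choose (j-x.1-x.2) : ℕ) : Q2)
      * (CC (γ x.1) * ((ψ Bq)^x.2 * (ψ Aq)^(j-x.1-x.2)))))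
  have drop : ∑ x ∈ (Finset.range (j+1)).sigma (fun p => Finset.range (j - p + 1)),
        ((x.1.choose x.2 * (x.1+x.2).choose (j-x.1-x.2) : ℕ) : Q2)
          * (CC (γ x.1) * ((ψ Bq)^x.2 * (ψ Aq)^(j-x.1-x.2)))
      = ∑ x ∈ ((Finset.range (j+1)).sigma (fun p => Finset.range (j - p + 1))).filter
            (fun x => 1 ≤ x.1),
        ((x.1.choose x.2 * (x.1+x.2).choose (j-x.1-x.2) : ℕ) : Q2)
          * (CC (γ x.1) * ((ψ Bq)^x.2 * (ψ Aq)^(j-x.1-x.2))) := by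
    symm
    apply Finset.sum_filter_of_ne
    intro x _ hne
    by_contra hx
    apply hne
    have hx1 : x.1 = 0 := by omega
    have : γ x.1 = 0 := by rw [hx1, γ, dif_neg]; omega
    rw [this, map_zero, zero_mul, mul_zero]
  rw [drop]
  refine Finset.sum_nbij' (fun x => ⟨j - x.1 - x.2, x.2⟩) (fun x => ⟨j - x.1 - x.2, x.2⟩)
    ?_ ?_ ?_ ?_ ?_
  · intro a ha
    simp only [Finset.mem_sigma, Finset.mem_range, Finset.mem_filter] at ha ⊢
    omega
  · intro b hb
    simp only [Finset.mem_sigma, Finset.mem_range, Finset.mem_filter] at hb ⊢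
    omega
  · intro a ha
    simp only [Finset.mem_sigma, Finset.mem_range] at ha
    have : j - (j - a.1 - a.2) - a.2 = a.1 := by omega
    exact Sigma.ext this (by simp)
  · intro b hb
    simp only [Finset.mem_sigma, Finset.mem_range, Finset.mem_filter] at hb
    have : j - (j - b.1 - b.2) - b.2 = b.1 := by omega
    exact Sigma.ext this (by simp)
  · intro a ha
    simp only [Finset.mem_sigma, Finset.mem_range] at ha
    obtain ⟨ha1, ha2⟩ := ha
    have h1 : j - (j - a.1 - a.2) - a.2 = a.1 := by omega
    have h2 : (j - a.1 - a.2) + a.2 = j - a.1 := by omega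
    simp only [h1, h2]
    rw [Nat.mul_comm]

def A1 : S := Polynomial.X^2 + Polynomial.X * Polynomial.C Polynomial.X
def B1 : S := (Polynomial.C Polynomial.X)^2
def A2 : S := (Polynomial.C Polynomial.X)^2 + Polynomial.X * Polynomial.C Polynomial.X
def B2 : S := Polynomial.X^2

lemma HH_symm' (p r : ℕ) : HH p r A1 B1 = HH p r A2 B2 := HH_symm p r

lemma BM (x : Gam) : σfull A1 B1 (T2 x) = σfull A2 B2 (T2 x) := by
  induction x using FreeAlgebra.induction with
  | grade0 r =>
    have h0 : T2 (algebraMap (ZMod 2) Gam r) = algebraMap (ZMod 2) _ r := T2.commutes r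
    rw [h0, AlgHom.commutes, AlgHom.commutes]
  | grade1 v =>
    have hv : FreeAlgebra.ι (ZMod 2) v = γ v.1 := by rw [γ, dif_pos v.2]
    rw [hv, sigma_T2_gen, sigma_T2_gen]
    exact Finset.sum_congr rfl fun p _ => by rw [HH_symm']
  | mul a b ha hb => rw [map_mul, map_mul, map_mul, ha, hb]
  | add a b ha hb => rw [map_add, map_add, map_add, ha, hb]

lemma psi_A1 : ψ A1 = Polynomial.X^2 + Polynomial.X * Polynomial.C Polynomial.X := by
  show Polynomial.map _ _ = _
  simp [A1, Polynomial.map_add, Polynomial.map_mul, Polynomial.map_pow, Polynomial.map_X,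
    Polynomial.map_C]

lemma psi_B1 : ψ B1 = (Polynomial.C Polynomial.X)^2 := by
  show Polynomial.map _ _ = _
  simp [B1, Polynomial.map_pow, Polynomial.map_C, Polynomial.map_X]

lemma psi_A2 : ψ A2 = (Polynomial.C Polynomial.X)^2 + Polynomial.X * Polynomial.C Polynomial.X := by
  show Polynomial.map _ _ = _
  simp [A2, Polynomial.map_add, Polynomial.map_mul, Polynomial.map_pow, Polynomial.map_X,
    Polynomial.map_C]

lemma psi_B2 : ψ B2 = Polynomial.X^2 := by
  show Polynomial.map _ _ = _
  simp [B2, Polynomial.map_pow, Polynomial.map_X]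

lemma B1_pow (m : ℕ) : (ψ B1)^m = Polynomial.C ((Polynomial.X : Polynomial Gam)^(2*m)) := by
  rw [psi_B1, ← pow_mul, ← Polynomial.C_pow]

lemma B2_pow (m : ℕ) : (ψ B2)^m = (Polynomial.X : Q2)^(2*m) := by
  rw [psi_B2, ← pow_mul]

lemma A1_pow (n : ℕ) : (ψ A1)^n = ∑ i ∈ Finset.range (n+1),
    (n.choose i : ZMod 2) •
      (Polynomial.C ((Polynomial.X : Polynomial Gam)^(n-i)) * (Polynomial.X : Q2)^(n+i)) := by
  rw [psi_A1]
  have hc : Commute ((Polynomial.X : Q2)^2) (Polynomial.X * Polynomial.C Polynomial.X) :=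
    (Polynomial.commute_X _).pow_left 2
  rw [hc.add_pow n]
  refine Finset.sum_congr rfl fun i hi => ?_
  simp only [Finset.mem_range] at hi
  rw [← (Nat.cast_commute (n.choose i) _).eq, ← cast_smul_Q2]
  congr 1
  have h1 : ((Polynomial.X : Q2) * Polynomial.C Polynomial.X)^(n-i)
      = Polynomial.X^(n-i) * Polynomial.C (Polynomial.X^(n-i)) := by
    rw [(Polynomial.commute_X (Polynomial.C (Polynomial.X : Polynomial Gam))).mul_pow,
      Polynomial.C_pow]
  rw [h1, ← pow_mul, ← mul_assoc, ← pow_add]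
  have h2 : 2*i + (n-i) = n+i := by omega
  rw [h2, Polynomial.X_pow_mul]

lemma A2_pow (n : ℕ) : (ψ A2)^n = ∑ i ∈ Finset.range (n+1),
    (n.choose i : ZMod 2) •
      (Polynomial.C ((Polynomial.X : Polynomial Gam)^(n+i)) * (Polynomial.X : Q2)^(n-i)) := by
  rw [psi_A2]
  have hc : Commute ((Polynomial.C (Polynomial.X : Polynomial Gam))^2)
      (Polynomial.X * Polynomial.C Polynomial.X) := by
    refine Commute.pow_left ?_ 2
    exact ((Polynomial.commute_X (Polynomial.C (Polynomial.X : Polynomial Gam))).symm).mul_right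
      (Commute.refl _)
  rw [hc.add_pow n]
  refine Finset.sum_congr rfl fun i hi => ?_
  simp only [Finset.mem_range] at hi
  rw [← (Nat.cast_commute (n.choose i) _).eq, ← cast_smul_Q2]
  congr 1
  have h1 : ((Polynomial.X : Q2) * Polynomial.C Polynomial.X)^(n-i)
      = Polynomial.X^(n-i) * Polynomial.C (Polynomial.X^(n-i)) := by
    rw [(Polynomial.commute_X (Polynomial.C (Polynomial.X : Polynomial Gam))).mul_pow,
      Polynomial.C_pow]
  rw [h1, ← pow_mul, ← Polynomial.C_pow]
  rw [← mul_assoc,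
    ← Polynomial.X_pow_mul (p := Polynomial.C (((Polynomial.X : Polynomial Gam))^(2*i))),
    mul_assoc, ← Polynomial.C_mul, ← pow_add]
  have h2 : 2*i + (n-i) = n+i := by omega
  rw [h2, Polynomial.X_pow_mul]

lemma eps_term1 (g : Gam) (m n c1 c2 : ℕ) :
    (((CC g * (ψ B1)^m * (ψ A1)^n).coeff c1).coeff c2)
    = if n ≤ c1 ∧ c1 ≤ 2*n ∧ c1 + c2 = 2*n + 2*m then (n.choose (c1 - n) : ZMod 2) • g
      else 0 := by
  have h0 : CC g * (ψ B1)^m = Polynomial.C (Polynomial.C g * Polynomial.X^(2*m)) := by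
    rw [B1_pow, show CC g = Polynomial.C (Polynomial.C g) from rfl, ← Polynomial.C_mul]
  rw [h0, A1_pow, Finset.mul_sum]
  have hterm : ∀ i ∈ Finset.range (n+1),
      Polynomial.C (Polynomial.C g * Polynomial.X^(2*m)) *
        ((n.choose i : ZMod 2) •
          (Polynomial.C ((Polynomial.X : Polynomial Gam)^(n-i)) * (Polynomial.X : Q2)^(n+i)))
      = (n.choose i : ZMod 2) •
          (Polynomial.C (Polynomial.C g * Polynomial.X^(2*m + (n-i))) * (Polynomial.X : Q2)^(n+i)) := by
    intro i _
    rw [mul_smul_comm, ← mul_assoc, ← Polynomial.C_mul, mul_assoc, ← pow_add]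
  rw [Finset.sum_congr rfl hterm, Polynomial.finset_sum_coeff]
  have hco : ∀ i ∈ Finset.range (n+1),
      ((n.choose i : ZMod 2) •
          (Polynomial.C (Polynomial.C g * Polynomial.X^(2*m + (n-i))) * (Polynomial.X : Q2)^(n+i))).coeff c1
      = (n.choose i : ZMod 2) •
          (if c1 = n + i then (Polynomial.C g * Polynomial.X^(2*m + (n-i)) : Polynomial Gam) else 0) := by
    intro i _
    rw [Polynomial.coeff_smul, Polynomial.coeff_C_mul, Polynomial.coeff_X_pow]
    by_cases h : c1 = n + i <;> simp [h]
  rw [Finset.sum_congr rfl hco, Polynomial.finset_sum_coeff]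
  have hco2 : ∀ i ∈ Finset.range (n+1),
      ((n.choose i : ZMod 2) •
          (if c1 = n + i then (Polynomial.C g * Polynomial.X^(2*m + (n-i)) : Polynomial Gam) else 0)).coeff c2
      = (n.choose i : ZMod 2) •
          (if c1 = n + i ∧ c2 = 2*m + (n-i) then g else 0) := by
    intro i _
    rw [Polynomial.coeff_smul]
    by_cases h : c1 = n + i
    · rw [if_pos h]
      rw [Polynomial.coeff_C_mul, Polynomial.coeff_X_pow]
      by_cases h2 : c2 = 2*m + (n-i)
      · rw [if_pos h2, mul_one, if_pos (And.intro h h2)]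
      · rw [if_neg h2, mul_zero, if_neg (fun hc => h2 hc.2)]
    · rw [if_neg h, if_neg (fun hc => h hc.1), Polynomial.coeff_zero]
  rw [Finset.sum_congr rfl hco2]
  by_cases hcond : n ≤ c1 ∧ c1 ≤ 2*n ∧ c1 + c2 = 2*n + 2*m
  · rw [if_pos hcond]
    obtain ⟨hc1, hc2, hc3⟩ := hcond
    refine Finset.sum_eq_single_of_mem (c1 - n) (Finset.mem_range.mpr (by omega)) ?_ |>.trans ?_
    · intro i _ hne
      rw [if_neg (by omega), smul_zero]
    · rw [if_pos (by omega)]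
  · rw [if_neg hcond]
    apply Finset.sum_eq_zero
    intro i hi
    simp only [Finset.mem_range] at hi
    by_cases h1 : c1 = n + i
    · by_cases h2 : c2 = 2*m + (n-i)
      · exact absurd ⟨by omega, by omega, by omega⟩ hcond
      · rw [if_neg (by tauto), smul_zero]
    · rw [if_neg (by tauto), smul_zero]

lemma eps_term2 (g : Gam) (m n c1 c2 : ℕ) :
    (((CC g * (ψ B2)^m * (ψ A2)^n).coeff c1).coeff c2)
    = if n ≤ c2 ∧ c2 ≤ 2*n ∧ c1 + c2 = 2*n + 2*m then (n.choose (c2 - n) : ZMod 2) • g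
      else 0 := by
  rw [B2_pow, A2_pow, Finset.mul_sum]
  have hterm : ∀ i ∈ Finset.range (n+1),
      (CC g * (Polynomial.X : Q2)^(2*m)) *
        ((n.choose i : ZMod 2) •
          (Polynomial.C ((Polynomial.X : Polynomial Gam)^(n+i)) * (Polynomial.X : Q2)^(n-i)))
      = (n.choose i : ZMod 2) •
          (Polynomial.C (Polynomial.C g * Polynomial.X^(n+i)) * (Polynomial.X : Q2)^(2*m + (n-i))) := by
    intro i _
    rw [mul_smul_comm]
    congr 1
    have swap : ∀ (u v : Polynomial Gam) (e f : ℕ),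
        Polynomial.C u * (Polynomial.X:Q2)^e * (Polynomial.C v * (Polynomial.X:Q2)^f)
        = Polynomial.C (u * v) * (Polynomial.X:Q2)^(e+f) := by
      intro u v e f
      rw [mul_assoc, ← mul_assoc ((Polynomial.X:Q2)^e), Polynomial.X_pow_mul,
        mul_assoc (Polynomial.C v), ← pow_add, ← mul_assoc, ← Polynomial.C_mul]
    rw [show CC g = Polynomial.C (Polynomial.C g) from rfl, swap]
  rw [Finset.sum_congr rfl hterm, Polynomial.finset_sum_coeff]
  have hco : ∀ i ∈ Finset.range (n+1),
      ((n.choose i : ZMod 2) •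
          (Polynomial.C (Polynomial.C g * Polynomial.X^(n+i)) * (Polynomial.X : Q2)^(2*m + (n-i)))).coeff c1
      = (n.choose i : ZMod 2) •
          (if c1 = 2*m + (n-i) then (Polynomial.C g * Polynomial.X^(n+i) : Polynomial Gam) else 0) := by
    intro i _
    rw [Polynomial.coeff_smul, Polynomial.coeff_C_mul, Polynomial.coeff_X_pow]
    by_cases h : c1 = 2*m + (n-i) <;> simp [h]
  rw [Finset.sum_congr rfl hco, Polynomial.finset_sum_coeff]
  have hco2 : ∀ i ∈ Finset.range (n+1),
      ((n.choose i : ZMod 2) •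
          (if c1 = 2*m + (n-i) then (Polynomial.C g * Polynomial.X^(n+i) : Polynomial Gam) else 0)).coeff c2
      = (n.choose i : ZMod 2) •
          (if c2 = n + i ∧ c1 = 2*m + (n-i) then g else 0) := by
    intro i _
    rw [Polynomial.coeff_smul]
    by_cases h : c1 = 2*m + (n-i)
    · rw [if_pos h]
      rw [Polynomial.coeff_C_mul, Polynomial.coeff_X_pow]
      by_cases h2 : c2 = n + i
      · rw [if_pos h2, mul_one, if_pos (And.intro h2 h)]
      · rw [if_neg h2, mul_zero, if_neg (fun hc => h2 hc.1)]
    · rw [if_neg h, if_neg (fun hc => h hc.2), Polynomial.coeff_zero]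
  rw [Finset.sum_congr rfl hco2]
  by_cases hcond : n ≤ c2 ∧ c2 ≤ 2*n ∧ c1 + c2 = 2*n + 2*m
  · rw [if_pos hcond]
    obtain ⟨hc1, hc2, hc3⟩ := hcond
    refine Finset.sum_eq_single_of_mem (c2 - n) (Finset.mem_range.mpr (by omega)) ?_ |>.trans ?_
    · intro i _ hne
      rw [if_neg (by omega), smul_zero]
    · rw [if_pos (by constructor <;> omega)]
  · rw [if_neg hcond]
    apply Finset.sum_eq_zero
    intro i hi
    simp only [Finset.mem_range] at hi
    by_cases h1 : c2 = n + i
    · by_cases h2 : c1 = 2*m + (n-i)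
      · exact absurd ⟨by omega, by omega, by omega⟩ hcond
      · rw [if_neg (by tauto), smul_zero]
    · rw [if_neg (by tauto), smul_zero]

lemma sigma_expand (Aq Bq : S) (P : Polynomial (Polynomial Gam)) :
    σfull Aq Bq P = ∑ n ∈ P.support, ∑ m ∈ (P.coeff n).support,
      CC ((P.coeff n).coeff m) * (ψ Bq)^m * (ψ Aq)^n := by
  show Polynomial.eval₂ _ _ P = _
  rw [Polynomial.eval₂_eq_sum, Polynomial.sum]
  refine Finset.sum_congr rfl fun n _ => ?_
  show Polynomial.eval₂ _ _ (P.coeff n) * _ = _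
  rw [Polynomial.eval₂_eq_sum, Polynomial.sum, Finset.sum_mul]
  rfl

lemma eps_sigma1 (x : Gam) (N r : ℕ) (hr : 1 ≤ r) (hrN : r < N)
    (hIH : ∀ m, 1 ≤ m → m < N → Sq m x = 0) :
    ((σfull A1 B1 (T2 x)).coeff (2*N - r)).coeff r
      = (N.choose (N - r) : ZMod 2) • Sq N x := by
  rw [sigma_expand]
  simp only [Polynomial.finset_sum_coeff]
  have hterm : ∀ n ∈ (T2 x).support, ∀ m ∈ ((T2 x).coeff n).support,
      (((CC (((T2 x).coeff n).coeff m) * (ψ B1)^m * (ψ A1)^n).coeff (2*N-r)).coeff r)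
      = if n = N ∧ m = 0 then (N.choose (N - r) : ZMod 2) • Sq N x else 0 := by
    intro n _ m _
    rw [eps_term1]
    by_cases hc : n ≤ 2*N-r ∧ 2*N-r ≤ 2*n ∧ (2*N-r) + r = 2*n + 2*m
    · rw [if_pos hc]
      obtain ⟨h1, h2, h3⟩ := hc
      by_cases hnm : n = N ∧ m = 0
      · obtain ⟨hn, hm⟩ := hnm
        rw [if_pos (And.intro hn hm), hn, hm, T2_coeff, Sq_id,
          show 2*N - r - N = N - r by omega]
      · rw [if_neg hnm]
        have hm1 : 1 ≤ m := by
          rcases Nat.eq_zero_or_pos m with hm0 | hm0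
          · exact absurd ⟨by omega, hm0⟩ hnm
          · exact hm0
        have hn1 : 1 ≤ n := by omega
        have hnN : n < N := by omega
        rw [T2_coeff, hIH n hn1 hnN, Sq_zero, smul_zero]
    · rw [if_neg hc]
      by_cases hnm : n = N ∧ m = 0
      · obtain ⟨hn, hm⟩ := hnm
        exact absurd ⟨by omega, by omega, by omega⟩ hc
      · rw [if_neg hnm]
  rw [Finset.sum_congr rfl (fun n hn => Finset.sum_congr rfl (fun m hm => hterm n hn m hm))]
  by_cases hSq : Sq N x = 0
  · rw [hSq, smul_zero]
    apply Finset.sum_eq_zero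
    intro n _
    apply Finset.sum_eq_zero
    intro m _
    simp
  · have hcN : ((T2 x).coeff N).coeff 0 = Sq N x := by rw [T2_coeff, Sq_id]
    have hNmem : N ∈ (T2 x).support := by
      rw [Polynomial.mem_support_iff]
      intro hz
      apply hSq
      rw [← hcN, hz, Polynomial.coeff_zero]
    have h0mem : (0:ℕ) ∈ ((T2 x).coeff N).support := by
      rw [Polynomial.mem_support_iff]
      intro hz
      exact hSq (by rw [← hcN, hz])
    refine Finset.sum_eq_single_of_mem N hNmem ?_ |>.trans ?_
    · intro n _ hne
      apply Finset.sum_eq_zero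
      intro m _
      rw [if_neg (fun hc => hne hc.1)]
    · refine Finset.sum_eq_single_of_mem 0 h0mem ?_ |>.trans ?_
      · intro m _ hne
        rw [if_neg (fun hc => hne hc.2)]
      · rw [if_pos ⟨rfl, rfl⟩]

lemma eps_sigma2 (x : Gam) (N r : ℕ) (hr : 1 ≤ r) (hrN : r < N)
    (hIH : ∀ m, 1 ≤ m → m < N → Sq m x = 0) :
    ((σfull A2 B2 (T2 x)).coeff (2*N - r)).coeff r = 0 := by
  rw [sigma_expand]
  simp only [Polynomial.finset_sum_coeff]
  apply Finset.sum_eq_zero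
  intro n _
  apply Finset.sum_eq_zero
  intro m _
  rw [eps_term2]
  by_cases hc : n ≤ r ∧ r ≤ 2*n ∧ (2*N-r) + r = 2*n + 2*m
  · rw [if_pos hc]
    obtain ⟨h1, h2, h3⟩ := hc
    have hn1 : 1 ≤ n := by omega
    have hnN : n < N := by omega
    rw [T2_coeff, hIH n hn1 hnN, Sq_zero, smul_zero]
  · rw [if_neg hc]

lemma choose_odd (a s : ℕ) (hs2 : s < 2^a) :
    (((2^a + s).choose s : ℕ) : ZMod 2) = 1 := by
  have key : ((1 + Polynomial.X : Polynomial (ZMod 2)))^(2^a + s)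
      = (1 + Polynomial.X^(2^a)) * (1 + Polynomial.X)^s := by
    rw [pow_add]
    congr 1
    rw [add_pow_char_pow, one_pow]
  have h1 := Polynomial.coeff_one_add_X_pow (ZMod 2) (2^a+s) s
  rw [key, add_mul, one_mul, Polynomial.coeff_add, Polynomial.coeff_X_pow_mul',
    if_neg (by omega), add_zero, Polynomial.coeff_one_add_X_pow, Nat.choose_self,
    Nat.cast_one] at h1
  exact h1.symm

end BMaux

/-- In total degrees d < 2^{k+2}, the k partially 𝒜-annihilateds coincide with
the totally 𝒜-annihilateds: if x ∈ Γ̃_{s,d} is annihilated by Sq^{2^i} for all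
0 ≤ i ≤ k, then x is annihilated by every Sq^n with n ≥ 1. -/


theorem delta_k_eq_annihilated_in_low_degrees (k s d : ℕ) (hd : d < 2 ^ (k + 2))
    (x : Gam) (hx : x ∈ GammaSD s d) (h : ∀ i ≤ k, Sq (2 ^ i) x = 0) :
    ∀ n, 1 ≤ n → Sq n x = 0 := by
  intro n
  induction n using Nat.strong_induction_on with
  | _ n IH =>
    intro hn
    by_cases hbig : d < 2*n
    · exact BMaux.Sq_vanish_of_degree hx n hbig
    push_neg at hbig
    set a := Nat.log 2 n with ha
    have h2a : 2^a ≤ n := Nat.pow_log_le_self 2 (by omega)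
    have h2a' : n < 2^(a+1) := Nat.lt_pow_succ_log_self (by norm_num) n
    by_cases hpow : n = 2^a
    · have hik : a ≤ k := by
        by_contra hik
        push_neg at hik
        have : 2^(k+1) ≤ 2^a := Nat.pow_le_pow_right (by norm_num) hik
        have hh : (2:ℕ)^(k+2) = 2 * 2^(k+1) := by ring
        omega
      rw [hpow]
      exact h a hik
    · set r := n - 2^a with hrdef
      have hr : 1 ≤ r := by omega
      have hrn : r < n := by
        have : 1 ≤ 2^a := Nat.one_le_two_pow
        omega
      have hrs : r < 2^a := by
        have : (2:ℕ)^(a+1) = 2 * 2^a := by ring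
        omega
      have hodd : ((n.choose (n - r) : ℕ) : ZMod 2) = 1 := by
        have h1 : n - r = 2^a := by omega
        have h2 : n = 2^a + r := by omega
        rw [h1, h2, Nat.choose_symm_add]
        exact BMaux.choose_odd a r hrs
      have hIH : ∀ m, 1 ≤ m → m < n → Sq m x = 0 := fun m h1 h2 => IH m h2 h1
      have e1 := BMaux.eps_sigma1 x n r hr hrn hIH
      have e2 := BMaux.eps_sigma2 x n r hr hrn hIH
      rw [BMaux.BM x] at e1
      rw [e2] at e1
      calc Sq n x = ((n.choose (n - r) : ℕ) : ZMod 2) • Sq n x := by rw [hodd, one_smul]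
        _ = 0 := e1.symm


end
end
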